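/- arXiv:2510.12013 — 3 statements merged into one kernel-verified Lean document; each statement's English description precedes it below -/
import Mathlib

section
/- Let q ≥ 2, s ≥ 2 an even integer, x, z ∈ R^d, and α > 0. Define f(u) = |x − u z|_s^q for u ∈ [0, α]. Then the second derivative satisfies sup_{u∈[0,α]} |f''(u)| ≤ q(|q−s| + (s−1)) (|x|_s + α|z|_s)^{q−2} |z|_s^2. -/
open Finset Real Filter Topology

/-! With `M v = ∑ i, (x i - v * z i) ^ s = ‖x - v z‖ₛ ^ s` (`s` even) and `P = q / s`, the chain rule
gives `f'' = P (P - 1) M ^ (P - 2) M' ^ 2 + P M ^ (P - 1) M''` wherever `M > 0`. Hölder's inequality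
with exponents `s / (s - k)` and `s / k` bounds `|M'| ≤ s ‖x - u z‖ₛ ^ (s - 1) ‖z‖ₛ` and
`|M''| ≤ s (s - 1) ‖x - u z‖ₛ ^ (s - 2) ‖z‖ₛ ^ 2`; the powers of `‖x - u z‖ₛ` then combine to
`‖x - u z‖ₛ ^ (q - 2)`, and Minkowski gives `‖x - u z‖ₛ ≤ ‖x‖ₛ + α ‖z‖ₛ`. Where `M u = 0` we have
`x = u z`, so `f v = ‖z‖ₛ ^ q |v - u| ^ q`, whose second derivative at `u` is `q ‖z‖ₛ ^ q 0 ^ (q - 2)`: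
`2 ‖z‖ₛ ^ 2` if `q = 2` and `0` if `q > 2`. -/

noncomputable def pNorm {ι : Type*} [Fintype ι] (s : ℕ) (a : ι → ℝ) : ℝ :=
  (∑ i, |a i| ^ s) ^ (1 / (s : ℝ))

namespace pNorm

variable {ι : Type*} [Fintype ι] {s : ℕ}

lemma nonneg (a : ι → ℝ) : 0 ≤ pNorm s a :=
  rpow_nonneg (sum_nonneg fun _ _ => by positivity) _

lemma rpow_natCast_eq_sum (hs : s ≠ 0) (a : ι → ℝ) : pNorm s a ^ (s : ℝ) = ∑ i, |a i| ^ s := by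
  rw [pNorm, ← rpow_mul (sum_nonneg fun _ _ => by positivity), one_div_mul_cancel (by positivity),
    rpow_one]

lemma pow_eq_sum (hs : s ≠ 0) (a : ι → ℝ) : pNorm s a ^ s = ∑ i, |a i| ^ s := by
  rw [← rpow_natCast, rpow_natCast_eq_sum hs]

lemma const_mul (hs : s ≠ 0) (c : ℝ) (a : ι → ℝ) :
    pNorm s (fun i => c * a i) = |c| * pNorm s a := by
  simp only [pNorm, abs_mul, mul_pow, ← mul_sum]
  rw [mul_rpow (by positivity) (sum_nonneg fun _ _ => by positivity), ← rpow_natCast,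
    ← rpow_mul (abs_nonneg c), mul_one_div_cancel (by positivity), rpow_one]

lemma sub_le (hs : 1 ≤ s) (a b : ι → ℝ) :
    pNorm s (fun i => a i - b i) ≤ pNorm s a + pNorm s b := by
  have h := Lp_add_le univ a (fun i => -b i) (p := s) (by exact_mod_cast hs)
  simp only [abs_neg, rpow_natCast, ← sub_eq_add_neg] at h
  exact h

lemma eq_zero_iff (hs : s ≠ 0) (a : ι → ℝ) : pNorm s a = 0 ↔ a = 0 := by
  rw [← pow_eq_zero_iff hs, pow_eq_sum hs, sum_eq_zero_iff_of_nonneg fun _ _ => by positivity]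
  simp [funext_iff, hs]

lemma sum_pow_mul_pow_le {k : ℕ} (hk : 0 < k) (hks : k ≤ s) (a b : ι → ℝ) :
    ∑ i, |a i| ^ (s - k) * |b i| ^ k ≤ pNorm s a ^ (s - k) * pNorm s b ^ k := by
  rcases hks.eq_or_lt with rfl | hks
  · simp [pow_eq_sum hk.ne']
  have hs : (0 : ℝ) < s := by exact_mod_cast hk.trans hks
  have hk0 : (0 : ℝ) < k := by exact_mod_cast hk
  have hsk : (0 : ℝ) < s - k := by
    have : (k : ℝ) < s := by exact_mod_cast hks
    linarith
  have hpq : HolderConjugate ((s : ℝ) / (s - k)) ((s : ℝ) / k) :=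
    ⟨by field_simp; ring, by positivity, by positivity⟩
  have H := inner_le_Lp_mul_Lq_of_nonneg univ (f := fun i => |a i| ^ (s - k))
    (g := fun i => |b i| ^ k) hpq (fun i _ => by positivity) (fun i _ => by positivity)
  have ea : ∀ i, (|a i| ^ (s - k)) ^ ((s : ℝ) / (s - k)) = |a i| ^ s := fun i => by
    rw [← rpow_natCast, ← rpow_mul (abs_nonneg _), Nat.cast_sub hks.le,
      mul_div_cancel₀ _ hsk.ne', rpow_natCast]
  have eb : ∀ i, (|b i| ^ k) ^ ((s : ℝ) / k) = |b i| ^ s := fun i => by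
    rw [← rpow_natCast, ← rpow_mul (abs_nonneg _), mul_div_cancel₀ _ hk0.ne', rpow_natCast]
  simp only [ea, eb, one_div_div] at H
  refine H.trans_eq ?_
  rw [pNorm, pNorm, ← rpow_natCast, ← rpow_natCast,
    ← rpow_mul (sum_nonneg fun _ _ => by positivity),
    ← rpow_mul (sum_nonneg fun _ _ => by positivity), Nat.cast_sub hks.le]
  congr 2 <;> field_simp

lemma abs_sum_pow_mul_pow_le {k : ℕ} (hk : 0 < k) (hks : k ≤ s) (a b : ι → ℝ) :
    |∑ i, a i ^ (s - k) * b i ^ k| ≤ pNorm s a ^ (s - k) * pNorm s b ^ k :=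
  (abs_sum_le_sum_abs _ _).trans <| by
    simpa only [abs_mul, abs_pow] using sum_pow_mul_pow_le hk hks a b

end pNorm

lemma hasDerivAt_mul_id_zero {𝕜 : Type*} [NontriviallyNormedField 𝕜] {g : 𝕜 → 𝕜}
    (hg : ContinuousAt g 0) : HasDerivAt (fun w => g w * w) (g 0) 0 := by
  rw [hasDerivAt_iff_tendsto_slope]
  refine (hg.tendsto.mono_left nhdsWithin_le_nhds).congr' ?_
  filter_upwards [self_mem_nhdsWithin] with w hw
  rw [slope_def_field, mul_zero, sub_zero, sub_zero, mul_div_cancel_right₀ _ hw]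

lemma deriv_deriv_abs_sub_rpow {q : ℝ} (hq : 2 ≤ q) (u : ℝ) :
    deriv (deriv fun v => |v - u| ^ q) u = q * 0 ^ (q - 2) := by
  have hderiv : deriv (fun v => |v - u| ^ q) = fun v => q * (|v - u| ^ (q - 2) * (v - u)) := by
    funext v
    rw [deriv_comp_sub_const (f := fun w => |w| ^ q), (hasDerivAt_abs_rpow _ (by linarith)).deriv,
      mul_assoc]
  have hcont : ContinuousAt (fun w : ℝ => |w| ^ (q - 2)) 0 :=
    ((continuous_rpow_const (by linarith)).comp continuous_abs).continuousAt
  have h := (HasDerivAt.comp_sub_const u u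
    (by rw [sub_self]; exact hasDerivAt_mul_id_zero hcont)).const_mul q
  rw [hderiv, h.deriv, abs_zero]

lemma deriv_deriv_rpow_const {M M' : ℝ → ℝ} {M'' u : ℝ} (p : ℝ)
    (hM : ∀ v, HasDerivAt M (M' v) v) (hM' : HasDerivAt M' M'' u) (hu : 0 < M u) :
    deriv (deriv fun v => M v ^ p) u
      = p * (p - 1) * M u ^ (p - 2) * M' u ^ 2 + p * M u ^ (p - 1) * M'' := by
  have hpos : ∀ᶠ v in 𝓝 u, 0 < M v := (hM u).continuousAt.eventually (eventually_gt_nhds hu)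
  have hderiv : deriv (fun v => M v ^ p) =ᶠ[𝓝 u] fun v => M' v * p * M v ^ (p - 1) :=
    hpos.mono fun v hv => ((hM v).rpow_const (Or.inl hv.ne')).deriv
  have h := (hM'.mul_const p).fun_mul ((hM u).rpow_const (p := p - 1) (Or.inl hu.ne'))
  rw [hderiv.deriv_eq, h.deriv, sub_sub, one_add_one_eq_two]
  ring

variable {ι : Type*} [Fintype ι]

lemma hasDerivAt_sum_sub_mul_pow_mul (n : ℕ) (x z w : ι → ℝ) (v : ℝ) :
    HasDerivAt (fun v => ∑ i, (x i - v * z i) ^ n * w i)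
      (-(n * ∑ i, (x i - v * z i) ^ (n - 1) * (z i * w i))) v := by
  have h := HasDerivAt.fun_sum (u := univ) fun i _ =>
    ((((hasDerivAt_id v).mul_const (z i)).const_sub (x i)).pow n).mul_const (w i)
  refine h.congr_deriv ?_
  rw [mul_sum, ← sum_neg_distrib]
  exact sum_congr rfl fun i _ => by simp only [id]; ring

lemma abs_rpow_second_deriv_le {s : ℕ} (hs : 2 ≤ s) {q g B D₁ D₂ : ℝ} (hq : 0 ≤ q) (hg : 0 < g)
    (hD₁ : |D₁| ≤ s * g ^ (s - 1) * B) (hD₂ : |D₂| ≤ s * (s - 1) * g ^ (s - 2) * B ^ 2) :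
    |q / s * (q / s - 1) * (g ^ s) ^ (q / s - 2) * D₁ ^ 2 + q / s * (g ^ s) ^ (q / s - 1) * D₂|
      ≤ q * (|q - s| + (s - 1)) * g ^ (q - 2) * B ^ 2 := by
  have hs0 : (0 : ℝ) < s := by positivity
  have hpow : ∀ (n : ℕ) (r : ℝ), (g ^ n) ^ r = g ^ (n * r) := fun n r => by
    rw [← rpow_natCast, ← rpow_mul hg.le]
  have e₁ : (g ^ s) ^ (q / s - 2) * (g ^ (s - 1)) ^ 2 = g ^ (q - 2) := by
    rw [← pow_mul, hpow, ← rpow_natCast g, ← rpow_add hg]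
    congr 1
    push_cast [Nat.cast_sub (by omega : 1 ≤ s)]
    field_simp
    ring
  have e₂ : (g ^ s) ^ (q / s - 1) * g ^ (s - 2) = g ^ (q - 2) := by
    rw [hpow, ← rpow_natCast g, ← rpow_add hg]
    congr 1
    push_cast [Nat.cast_sub hs]
    field_simp
    ring
  have hP : |q / s - 1| * s = |q - s| := by
    rw [← abs_of_pos hs0, ← abs_mul, abs_of_pos hs0, sub_mul, div_mul_cancel₀ _ hs0.ne', one_mul]
  have hD₁sq : D₁ ^ 2 ≤ (s * g ^ (s - 1) * B) ^ 2 := by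
    rw [← sq_abs]
    exact pow_le_pow_left₀ (abs_nonneg _) hD₁ 2
  calc _ ≤ q / s * |q / s - 1| * (g ^ s) ^ (q / s - 2) * D₁ ^ 2
          + q / s * (g ^ s) ^ (q / s - 1) * |D₂| := by
        refine (abs_add_le _ _).trans_eq ?_
        simp only [abs_mul, abs_div, abs_of_nonneg hq, abs_of_pos hs0, abs_pow, sq_abs,
          abs_of_nonneg (rpow_nonneg (pow_nonneg hg.le s) _)]
    _ ≤ q / s * |q / s - 1| * (g ^ s) ^ (q / s - 2) * (s * g ^ (s - 1) * B) ^ 2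
          + q / s * (g ^ s) ^ (q / s - 1) * (s * (s - 1) * g ^ (s - 2) * B ^ 2) := by
        gcongr
    _ = q * (|q / s - 1| * s) * ((g ^ s) ^ (q / s - 2) * (g ^ (s - 1)) ^ 2) * B ^ 2
          + q * (s - 1) * ((g ^ s) ^ (q / s - 1) * g ^ (s - 2)) * B ^ 2 := by
        field_simp
    _ = q * (|q - s| + (s - 1)) * g ^ (q - 2) * B ^ 2 := by
        rw [hP, e₁, e₂]
        ring

lemma sum_pow_rpow_div_eq_pNorm_rpow {s : ℕ} (hs : s ≠ 0) (hse : Even s) (a : ι → ℝ) (q : ℝ) :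
    (∑ i, a i ^ s) ^ (q / s) = pNorm s a ^ q := by
  rw [sum_congr rfl fun i _ => (hse.pow_abs (a i)).symm, ← pNorm.rpow_natCast_eq_sum hs,
    ← rpow_mul (pNorm.nonneg a), mul_div_cancel₀ _ (by positivity)]

lemma deriv_deriv_sum_sub_mul_pow_rpow_of_eq_mul {s : ℕ} (hs : s ≠ 0) (hse : Even s) {q : ℝ}
    (hq : 2 ≤ q) {x z : ι → ℝ} {u : ℝ} (hx : ∀ i, x i = u * z i) :
    deriv (deriv fun v => (∑ i, (x i - v * z i) ^ s) ^ (q / s)) u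
      = pNorm s z ^ q * (q * 0 ^ (q - 2)) := by
  have hf : (fun v => (∑ i, (x i - v * z i) ^ s) ^ (q / s))
      = fun v => pNorm s z ^ q * |v - u| ^ q := by
    funext v
    simp only [hx, ← sub_mul, sum_pow_rpow_div_eq_pNorm_rpow hs hse, pNorm.const_mul hs,
      abs_sub_comm u v]
    rw [mul_rpow (abs_nonneg _) (pNorm.nonneg z), mul_comm]
  simp only [hf, deriv_const_mul_field', deriv_deriv_abs_sub_rpow hq]

theorem abs_deriv_deriv_sum_sub_mul_pow_rpow_le {s : ℕ} (hs : 2 ≤ s) (hse : Even s) {q : ℝ}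
    (hq : 2 ≤ q) (x z : ι → ℝ) (u : ℝ) :
    |deriv (deriv fun v => (∑ i, (x i - v * z i) ^ s) ^ (q / s)) u|
      ≤ q * (|q - s| + (s - 1)) * pNorm s (fun i => x i - u * z i) ^ (q - 2) * pNorm s z ^ 2 := by
  have hs0 : s ≠ 0 := by omega
  rcases (pNorm.nonneg (s := s) fun i => x i - u * z i).eq_or_lt with hg | hg
  · have hx : ∀ i, x i = u * z i := fun i =>
      sub_eq_zero.1 (congrFun ((pNorm.eq_zero_iff hs0 _).1 hg.symm) i)
    have hB : pNorm s z ^ q * (0 : ℝ) ^ (q - 2) = pNorm s z ^ 2 * (0 : ℝ) ^ (q - 2) := by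
      rw [show q = 2 + (q - 2) by ring, rpow_add' (pNorm.nonneg z) (by linarith),
        add_sub_cancel_left, rpow_two, mul_assoc, ← mul_rpow (pNorm.nonneg z) le_rfl, mul_zero]
    have hA : 0 ≤ pNorm s z ^ 2 * (0 : ℝ) ^ (q - 2) := by positivity
    have hC : (1 : ℝ) ≤ |q - s| + (s - 1) := by
      have : (2 : ℝ) ≤ s := by exact_mod_cast hs
      linarith [abs_nonneg (q - s)]
    rw [deriv_deriv_sum_sub_mul_pow_rpow_of_eq_mul hs0 hse hq hx, ← hg, mul_left_comm, hB,
      abs_of_nonneg (mul_nonneg (by linarith) hA)]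
    nlinarith [mul_le_mul_of_nonneg_right hC hA]
  · have hM : ∀ v, HasDerivAt (fun v => ∑ i, (x i - v * z i) ^ s)
        (-(s * ∑ i, (x i - v * z i) ^ (s - 1) * z i)) v := fun v => by
      simpa using hasDerivAt_sum_sub_mul_pow_mul s x z 1 v
    have hM' := (hasDerivAt_sum_sub_mul_pow_mul (s - 1) x z z u).const_mul (s : ℝ) |>.neg
    have hMu : ∑ i, (x i - u * z i) ^ s = pNorm s (fun i => x i - u * z i) ^ s := by
      rw [pNorm.pow_eq_sum hs0]
      exact sum_congr rfl fun i _ => (hse.pow_abs _).symm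
    rw [deriv_deriv_rpow_const _ hM hM' (hMu ▸ pow_pos hg s), hMu]
    refine abs_rpow_second_deriv_le hs (by linarith) hg ?_ ?_
    · rw [abs_neg, abs_mul, Nat.abs_cast, mul_assoc]
      gcongr
      simpa only [pow_one] using pNorm.abs_sum_pow_mul_pow_le one_pos (by omega) _ z
    · have hs1 : (0 : ℝ) ≤ s - 1 := sub_nonneg.2 (by exact_mod_cast (by omega : 1 ≤ s))
      rw [abs_neg, abs_mul, abs_neg, abs_mul, Nat.abs_cast, Nat.abs_cast,
        Nat.cast_sub (by omega : 1 ≤ s), Nat.cast_one, mul_assoc, mul_assoc]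
      gcongr
      simpa only [← sq, Nat.sub_sub, one_add_one_eq_two] using
        pNorm.abs_sum_pow_mul_pow_le two_pos hs (fun i => x i - u * z i) z

theorem stmt3_general (d s : ℕ) (hs : 2 ≤ s) (hse : Even s) (q : ℝ) (hq : 2 ≤ q)
    (x z : Fin d → ℝ) (α : ℝ) :
    ∀ u ∈ Set.Icc (0 : ℝ) α,
      |deriv (deriv (fun u : ℝ => (∑ i, (x i - u * z i) ^ s) ^ (q / (s : ℝ)))) u|
        ≤ q * (|q - (s : ℝ)| + ((s : ℝ) - 1)) *
            ((∑ i, |x i| ^ s) ^ (1 / (s : ℝ)) + α * (∑ i, |z i| ^ s) ^ (1 / (s : ℝ))) ^ (q - 2) *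
            ((∑ i, |z i| ^ s) ^ (1 / (s : ℝ))) ^ 2 := by
  rintro u ⟨hu₀, huα⟩
  have hmink : pNorm s (fun i => x i - u * z i) ≤ pNorm s x + α * pNorm s z :=
    calc _ ≤ pNorm s x + pNorm s (fun i => u * z i) := pNorm.sub_le (by omega) _ _
      _ = pNorm s x + u * pNorm s z := by rw [pNorm.const_mul (by omega), abs_of_nonneg hu₀]
      _ ≤ pNorm s x + α * pNorm s z := by gcongr; exact pNorm.nonneg z
  have hC : 0 ≤ q * (|q - s| + ((s : ℝ) - 1)) := by
    have : (2 : ℝ) ≤ s := by exact_mod_cast hs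
    exact mul_nonneg (by linarith) (by linarith [abs_nonneg (q - s)])
  refine (abs_deriv_deriv_sum_sub_mul_pow_rpow_le hs hse hq x z u).trans ?_
  exact mul_le_mul_of_nonneg_right
    (mul_le_mul_of_nonneg_left (rpow_le_rpow (pNorm.nonneg _) hmink (by linarith)) hC)
    (sq_nonneg _)

theorem stmt3 (d s : ℕ) (hs : 2 ≤ s) (hse : Even s) (q : ℝ) (hq : 2 ≤ q)
    (x z : Fin d → ℝ) (α : ℝ) (hα : 0 < α) :
    ∀ u ∈ Set.Icc (0 : ℝ) α,
      |deriv (deriv (fun u : ℝ => (∑ i, (x i - u * z i) ^ s) ^ (q / (s : ℝ)))) u|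
        ≤ q * (|q - (s : ℝ)| + ((s : ℝ) - 1)) *
            ((∑ i, |x i| ^ s) ^ (1 / (s : ℝ)) + α * (∑ i, |z i| ^ s) ^ (1 / (s : ℝ))) ^ (q - 2) *
            ((∑ i, |z i| ^ s) ^ (1 / (s : ℝ))) ^ 2 :=
  stmt3_general d s hs hse q hq x z α
end

section
/- Let q ≥ 2, s ≥ 2 an even integer, x, z ∈ R^d, and α > 0. Then | |x − αz|_s^q − |x|_s^q + qα |x|_s^{q−s} ⟨x^{⊙(s−1)}, z⟩ | ≤ (qα²/2)(|q−s| + (s−1)) (|x|_s + α|z|_s)^{q−2} |z|_s^2, where x^{⊙(s−1)} is the entrywise (s−1)-th power of x. -/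
/-!
Along the line `t ↦ x - t • z` put `f t = |x - t z|_s^q`; the claim is the Taylor bound
`|f α - f 0 - α f' 0| ≤ α² / 2 · sup |f''|` on `[0, α]`. As `s` is even, `|y|_s^s = ∑ yᵢ^s` is a
polynomial, so wherever `y = x - t z ≠ 0`
`f'' = q (q - s) |y|^(q-2s) ⟨y^(s-1), z⟩² + q (s - 1) |y|^(q-s) ⟨y^(s-2), z²⟩`,
and Hölder's inequality bounds both brackets by `|y|^(q-2) |z|²`, with `|y| ≤ |x| + α |z|`.
If instead `x - t z` vanishes for some `t`, then `x = a z` and everything is `|z|_s^q` times the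
same bound for the scalar function `|a - t|^q`, whose derivative `-q |u|^(q-2) u` is Lipschitz
with constant `q (q - 1) R^(q-2)` on `[-R, R]`; and `q - 1 ≤ |q - s| + (s - 1)`.
-/

open Finset Real

/-- The `ℓ^s` norm for a natural exponent `s`. -/
noncomputable def lnorm (s : ℕ) {d : ℕ} (x : Fin d → ℝ) : ℝ :=
  (∑ i, |x i| ^ s) ^ (1 / (s : ℝ))

open Set
open scoped ENNReal

theorem pow_rpow_natCast_div {m : ℕ} (hm : m ≠ 0) {a : ℝ} (ha : 0 ≤ a) (n : ℕ) :
    (a ^ m) ^ ((n : ℝ) / m) = a ^ n := by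
  rw [← Real.rpow_natCast a m, ← Real.rpow_mul ha, mul_div_cancel₀ _ (by positivity),
    Real.rpow_natCast]

theorem abs_sub_sub_mul_le_of_abs_deriv_sub_le {f f' : ℝ → ℝ} {c K : ℝ} (hc : 0 ≤ c)
    (hf : ∀ t ∈ Icc 0 c, HasDerivAt f (f' t) t) (hf' : ∀ t ∈ Icc 0 c, |f' t - f' 0| ≤ K * t) :
    |f c - f 0 - c * f' 0| ≤ K * c ^ 2 / 2 := by
  have hg : ∀ t ∈ Icc 0 c, HasDerivAt (fun t => f t - f 0 - t * f' 0) (f' t - f' 0) t :=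
    fun t ht => ((hf t ht).sub_const (f 0)).sub (hasDerivAt_mul_const (f' 0))
  have hB : ∀ t, HasDerivAt (fun t => K * t ^ 2 / 2) (K * t) t :=
    fun t => (((hasDerivAt_pow 2 t).const_mul K).div_const 2).congr_deriv
      (by norm_num [mul_div_assoc])
  refine image_norm_le_of_norm_deriv_right_le_deriv_boundary
    (fun t ht => (hg t ht).continuousAt.continuousWithinAt)
    (fun t ht => (hg t (Ico_subset_Icc_self ht)).hasDerivWithinAt) (by simp) hB
    (fun t ht => hf' t (Ico_subset_Icc_self ht)) (right_mem_Icc.2 hc)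

theorem abs_sub_sub_mul_le_of_abs_deriv_deriv_le {f f' f'' : ℝ → ℝ} {c M : ℝ} (hc : 0 ≤ c)
    (hf : ∀ t ∈ Icc 0 c, HasDerivAt f (f' t) t) (hf' : ∀ t ∈ Icc 0 c, HasDerivAt f' (f'' t) t)
    (hf'' : ∀ t ∈ Icc 0 c, |f'' t| ≤ M) :
    |f c - f 0 - c * f' 0| ≤ M * c ^ 2 / 2 :=
  abs_sub_sub_mul_le_of_abs_deriv_sub_le hc hf fun t ht => by
    simpa using norm_image_sub_le_of_norm_deriv_le_segment'
      (fun u hu => (hf' u hu).hasDerivWithinAt) (fun u hu => hf'' u (Ico_subset_Icc_self hu))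
      t ht

theorem abs_rpow_sub_rpow_le {p R a b : ℝ} (hp : 1 ≤ p) (ha : a ∈ Icc 0 R) (hb : b ∈ Icc 0 R) :
    |b ^ p - a ^ p| ≤ p * R ^ (p - 1) * |b - a| := by
  refine (convex_Icc 0 R).norm_image_sub_le_of_norm_hasDerivWithin_le
    (fun t _ => (hasDerivAt_rpow_const (Or.inr hp)).hasDerivWithinAt) (fun t ht => ?_) ha hb
  rw [norm_mul, Real.norm_of_nonneg (by linarith), Real.norm_of_nonneg (rpow_nonneg ht.1 _)]
  gcongr
  exacts [ht.1, ht.2]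

theorem abs_rpow_sub_one_le {q R t : ℝ} (hq : 2 ≤ q) (ht : |t| ≤ R) :
    |t| ^ (q - 1) ≤ (q - 1) * R ^ (q - 2) * |t| := by
  calc |t| ^ (q - 1) = |t| ^ (q - 2) * |t| := by
        rw [show q - 1 = q - 2 + 1 by ring,
          rpow_add_one' (abs_nonneg t) (by linarith : (0 : ℝ) < q - 2 + 1).ne']
    _ ≤ (q - 1) * R ^ (q - 2) * |t| := by
        gcongr ?_ * _
        calc |t| ^ (q - 2) ≤ R ^ (q - 2) := by gcongr
          _ ≤ (q - 1) * R ^ (q - 2) :=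
            le_mul_of_one_le_left (rpow_nonneg ((abs_nonneg t).trans ht) _) (by linarith)

theorem abs_rpow_sub_two_mul_of_nonneg {q t : ℝ} (hq : 2 ≤ q) (ht : 0 ≤ t) :
    |t| ^ (q - 2) * t = t ^ (q - 1) := by
  rw [abs_of_nonneg ht, show q - 1 = q - 2 + 1 by ring,
    rpow_add_one' ht (by linarith : (0 : ℝ) < q - 2 + 1).ne']

theorem abs_abs_rpow_sub_two_mul_sub_le {q R a b : ℝ} (hq : 2 ≤ q) (ha : |a| ≤ R) (hb : |b| ≤ R) :
    |(|b| ^ (q - 2) * b) - |a| ^ (q - 2) * a| ≤ (q - 1) * R ^ (q - 2) * |b - a| := by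
  wlog hb0 : 0 ≤ b generalizing a b
  · have h := this (a := -a) (b := -b) (by rwa [abs_neg]) (by rwa [abs_neg]) (by linarith)
    rwa [abs_neg, abs_neg, show |b| ^ (q - 2) * -b - |a| ^ (q - 2) * -a
      = -(|b| ^ (q - 2) * b - |a| ^ (q - 2) * a) by ring, neg_sub_neg, abs_neg, abs_sub_comm a] at h
  rcases le_total 0 a with ha0 | ha0
  · rw [abs_rpow_sub_two_mul_of_nonneg hq ha0, abs_rpow_sub_two_mul_of_nonneg hq hb0]
    convert abs_rpow_sub_rpow_le (p := q - 1) (by linarith) ⟨ha0, (le_abs_self a).trans ha⟩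
      ⟨hb0, (le_abs_self b).trans hb⟩ using 4
    ring
  · calc |(|b| ^ (q - 2) * b) - |a| ^ (q - 2) * a|
        = |b| ^ (q - 1) + |a| ^ (q - 1) := by
          have hψa := abs_rpow_sub_two_mul_of_nonneg hq (neg_nonneg.2 ha0)
          rw [abs_neg, mul_neg, ← abs_of_nonpos ha0] at hψa
          have hψb : |b| ^ (q - 2) * b = |b| ^ (q - 1) := by
            rw [abs_rpow_sub_two_mul_of_nonneg hq hb0, abs_of_nonneg hb0]
          rw [hψb, ← neg_neg (|a| ^ (q - 2) * a), hψa, sub_neg_eq_add,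
            abs_of_nonneg (by positivity)]
      _ ≤ (q - 1) * R ^ (q - 2) * |b| + (q - 1) * R ^ (q - 2) * |a| :=
          add_le_add (abs_rpow_sub_one_le hq hb) (abs_rpow_sub_one_le hq ha)
      _ = (q - 1) * R ^ (q - 2) * |b - a| := by
          rw [abs_of_nonneg hb0, abs_of_nonpos ha0, abs_of_nonneg (by linarith : 0 ≤ b - a)]; ring

theorem abs_abs_sub_rpow_sub_add_le {q a α : ℝ} (hq : 2 ≤ q) (hα : 0 ≤ α) :
    |(|a - α| ^ q - |a| ^ q + q * α * (|a| ^ (q - 2) * a))|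
      ≤ q * (q - 1) / 2 * α ^ 2 * (|a| + α) ^ (q - 2) := by
  have hf : ∀ t ∈ Icc 0 α, HasDerivAt (fun t => |a - t| ^ q)
      (-(q * (|a - t| ^ (q - 2) * (a - t)))) t := fun t _ =>
    ((hasDerivAt_abs_rpow (a - t) (by linarith : 1 < q)).comp t
      ((hasDerivAt_id t).const_sub a)).congr_deriv (by ring)
  have hf' : ∀ t ∈ Icc 0 α,
      |-(q * (|a - t| ^ (q - 2) * (a - t))) - -(q * (|a - 0| ^ (q - 2) * (a - 0)))|
        ≤ q * (q - 1) * (|a| + α) ^ (q - 2) * t := fun t ht => by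
    have hat : |a - t| ≤ |a| + α :=
      (abs_sub _ _).trans (by rw [abs_of_nonneg ht.1]; linarith [ht.2])
    have h := abs_abs_rpow_sub_two_mul_sub_le hq (le_add_of_nonneg_right hα) hat
    rw [sub_zero, neg_sub_neg, ← mul_sub, abs_mul, abs_of_nonneg (by linarith : 0 ≤ q),
      abs_sub_comm]
    calc q * |(|a - t| ^ (q - 2) * (a - t)) - |a| ^ (q - 2) * a|
        ≤ q * ((q - 1) * (|a| + α) ^ (q - 2) * |a - t - a|) := by gcongr
      _ = q * (q - 1) * (|a| + α) ^ (q - 2) * t := by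
        rw [sub_sub_cancel_left, abs_neg, abs_of_nonneg ht.1]; ring
  have h := abs_sub_sub_mul_le_of_abs_deriv_sub_le hα hf hf'
  simp only [sub_zero] at h
  convert h using 2 <;> ring

theorem abs_rpow_sub_mul_pow_sub_one {s : ℕ} (hs : 2 ≤ s) (hse : Even s) (q a : ℝ) :
    |a| ^ (q - s) * a ^ (s - 1) = |a| ^ (q - 2) * a := by
  rcases eq_or_ne a 0 with rfl | ha
  · simp [zero_pow (by omega : s - 1 ≠ 0)]
  have hse2 : Even (s - 2) := (Nat.even_sub hs).2 (by simp [hse])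
  rw [show s - 1 = s - 2 + 1 by omega, pow_succ, ← hse2.pow_abs, ← mul_assoc, ← rpow_natCast,
    ← rpow_add (abs_pos.2 ha), Nat.cast_sub hs]
  ring_nf

section lnorm

variable {d s : ℕ}

theorem lnorm_eq_norm_toLp (hs : s ≠ 0) (x : Fin d → ℝ) :
    lnorm s x = ‖WithLp.toLp (s : ℝ≥0∞) x‖ := by
  rw [PiLp.norm_eq_sum (by simp [Nat.pos_of_ne_zero hs])]
  simp [lnorm, Real.rpow_natCast]

theorem lnorm_nonneg (x : Fin d → ℝ) : 0 ≤ lnorm s x := by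
  unfold lnorm; positivity

theorem fact_one_le_natCast (hs : s ≠ 0) : Fact (1 ≤ (s : ℝ≥0∞)) :=
  ⟨Nat.one_le_cast.2 (Nat.one_le_iff_ne_zero.2 hs)⟩

theorem lnorm_smul (hs : s ≠ 0) (c : ℝ) (x : Fin d → ℝ) :
    lnorm s (c • x) = |c| * lnorm s x := by
  have := fact_one_le_natCast hs
  rw [lnorm_eq_norm_toLp hs, lnorm_eq_norm_toLp hs, WithLp.toLp_smul, norm_smul, Real.norm_eq_abs]

theorem lnorm_sub_smul_le (hs : s ≠ 0) (x z : Fin d → ℝ) (t : ℝ) :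
    lnorm s (x - t • z) ≤ lnorm s x + |t| * lnorm s z := by
  have := fact_one_le_natCast hs
  rw [← lnorm_smul hs, lnorm_eq_norm_toLp hs, lnorm_eq_norm_toLp hs, lnorm_eq_norm_toLp hs,
    WithLp.toLp_sub]
  exact norm_sub_le _ _

theorem lnorm_pos (hs : s ≠ 0) {x : Fin d → ℝ} (hx : x ≠ 0) : 0 < lnorm s x := by
  have := fact_one_le_natCast hs
  rw [lnorm_eq_norm_toLp hs]
  exact norm_pos_iff.2 ((WithLp.toLp_eq_zero (s : ℝ≥0∞)).not.2 hx)

theorem lnorm_pow (hs : s ≠ 0) (x : Fin d → ℝ) : lnorm s x ^ s = ∑ i, |x i| ^ s := by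
  rw [lnorm, ← Real.rpow_natCast, ← Real.rpow_mul (by positivity),
    one_div_mul_cancel (by positivity), Real.rpow_one]

theorem lnorm_rpow (x : Fin d → ℝ) (r : ℝ) : lnorm s x ^ r = (∑ i, |x i| ^ s) ^ (r / s) := by
  rw [lnorm, ← Real.rpow_mul (by positivity)]
  ring_nf

theorem lnorm_rpow_of_even (hse : Even s) (x : Fin d → ℝ) (r : ℝ) :
    lnorm s x ^ r = (∑ i, x i ^ s) ^ (r / s) := by
  simp_rw [lnorm_rpow, hse.pow_abs]

theorem sum_abs_pow_mul_abs_pow_le {k : ℕ} (hk : k ≠ 0) (hks : k ≤ s) (y w : Fin d → ℝ) :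
    ∑ i, |y i| ^ (s - k) * |w i| ^ k ≤ lnorm s y ^ (s - k) * lnorm s w ^ k := by
  rcases hks.eq_or_lt with rfl | hlt
  · simp [lnorm_pow hk]
  have hpq : Real.HolderConjugate ((s : ℝ) / (s - k : ℕ)) ((s : ℝ) / k) := by
    have hs : (0 : ℝ) < s := by exact_mod_cast hk.bot_lt.trans hlt
    have hsk : (0 : ℝ) < (s - k : ℕ) := by exact_mod_cast Nat.sub_pos_of_lt hlt
    refine ⟨?_, by positivity, by positivity⟩
    rw [inv_div, inv_div, ← add_div, Nat.cast_sub hlt.le, sub_add_cancel, div_self hs.ne', inv_one]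
  have holder := inner_le_Lp_mul_Lq_of_nonneg univ hpq
    (f := fun i => |y i| ^ (s - k)) (g := fun i => |w i| ^ k)
    (fun _ _ => by positivity) (fun _ _ => by positivity)
  simp only [pow_rpow_natCast_div (by omega : s - k ≠ 0) (abs_nonneg _),
    pow_rpow_natCast_div hk (abs_nonneg _), one_div_div] at holder
  rwa [← Real.rpow_natCast, ← Real.rpow_natCast (lnorm s w), lnorm_rpow, lnorm_rpow]

theorem hasDerivAt_sum_sub_smul_pow_mul (x z c : Fin d → ℝ) (k : ℕ) (t : ℝ) :
    HasDerivAt (fun u => ∑ i, (x - u • z) i ^ k * c i)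
      (-(k : ℝ) * ∑ i, (x - t • z) i ^ (k - 1) * (z i * c i)) t := by
  refine (HasDerivAt.fun_sum (u := univ) fun i _ =>
    ((((hasDerivAt_id t).mul_const (z i)).const_sub (x i)).pow k).mul_const (c i)).congr_deriv ?_
  rw [Finset.mul_sum]
  refine sum_congr rfl fun i _ => ?_
  simp only [id, Pi.sub_apply, Pi.smul_apply, smul_eq_mul]
  ring

theorem hasDerivAt_lnorm_rpow_sub_smul (hs : s ≠ 0) (hse : Even s) {x z : Fin d → ℝ} {t : ℝ}
    (ht : x - t • z ≠ 0) (r : ℝ) :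
    HasDerivAt (fun u => lnorm s (x - u • z) ^ r)
      (-r * (lnorm s (x - t • z) ^ (r - s) * ∑ i, (x - t • z) i ^ (s - 1) * z i)) t := by
  have hF : HasDerivAt (fun u => ∑ i, (x - u • z) i ^ s)
      (-(s : ℝ) * ∑ i, (x - t • z) i ^ (s - 1) * z i) t := by
    simpa using hasDerivAt_sum_sub_smul_pow_mul x z 1 s t
  have hpos : 0 < ∑ i, (x - t • z) i ^ s := by
    simpa [lnorm_pow hs, hse.pow_abs] using pow_pos (lnorm_pos hs ht) s
  simp_rw [lnorm_rpow_of_even hse]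
  refine (hF.rpow_const (p := r / s) (Or.inl hpos.ne')).congr_deriv ?_
  rw [show (r - s) / s = r / s - 1 by field_simp]
  field_simp

theorem hasDerivAt_lnorm_rpow_mul_sum_sub_smul (hs : 2 ≤ s) (hse : Even s) {x z : Fin d → ℝ}
    {t : ℝ} (ht : x - t • z ≠ 0) (r : ℝ) :
    HasDerivAt (fun u => lnorm s (x - u • z) ^ r * ∑ i, (x - u • z) i ^ (s - 1) * z i)
      (-(r * lnorm s (x - t • z) ^ (r - s) * (∑ i, (x - t • z) i ^ (s - 1) * z i) ^ 2
        + (s - 1) * lnorm s (x - t • z) ^ r * ∑ i, (x - t • z) i ^ (s - 2) * z i ^ 2)) t := by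
  refine ((hasDerivAt_lnorm_rpow_sub_smul (by omega) hse ht r).mul
    (hasDerivAt_sum_sub_smul_pow_mul x z z (s - 1) t)).congr_deriv ?_
  simp only [Nat.cast_sub (by omega : 1 ≤ s), Nat.cast_one, show s - 1 - 1 = s - 2 by omega, ← sq]
  ring

theorem abs_rpow_mul_sum_sq_add_le (hs : 2 ≤ s) (hse : Even s) {y : Fin d → ℝ} (hy : y ≠ 0)
    (z : Fin d → ℝ) (r : ℝ) :
    |r * lnorm s y ^ (r - s) * (∑ i, y i ^ (s - 1) * z i) ^ 2
        + (s - 1) * lnorm s y ^ r * ∑ i, y i ^ (s - 2) * z i ^ 2|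
      ≤ (|r| + (s - 1)) * lnorm s y ^ (r + s - 2) * lnorm s z ^ 2 := by
  set N := lnorm s y
  have hN : 0 < N := lnorm_pos (by omega) hy
  have hG : |∑ i, y i ^ (s - 1) * z i| ≤ N ^ (s - 1) * lnorm s z := by
    refine (abs_sum_le_sum_abs _ _).trans ?_
    simpa [abs_mul, abs_pow, Nat.sub_sub_self (by omega : 1 ≤ s)] using
      sum_abs_pow_mul_abs_pow_le one_ne_zero (by omega : 1 ≤ s) y z
  have hse2 : Even (s - 2) := (Nat.even_sub hs).2 (by simp [hse])
  have hH : ∑ i, y i ^ (s - 2) * z i ^ 2 ≤ N ^ (s - 2) * lnorm s z ^ 2 := by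
    simpa [hse2.pow_abs, Nat.sub_sub_self hs] using
      sum_abs_pow_mul_abs_pow_le two_ne_zero hs y z
  have hH0 : 0 ≤ ∑ i, y i ^ (s - 2) * z i ^ 2 :=
    sum_nonneg fun i _ => mul_nonneg (hse2.pow_nonneg _) (sq_nonneg _)
  have hs1 : (0 : ℝ) ≤ s - 1 := by
    have : (2 : ℝ) ≤ s := by exact_mod_cast hs
    linarith
  have e1 : N ^ (r - s) * (N ^ (s - 1)) ^ 2 = N ^ (r + s - 2) := by
    rw [← pow_mul, ← rpow_natCast, ← rpow_add hN]
    push_cast [Nat.cast_sub (by omega : 1 ≤ s)]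
    ring_nf
  have e2 : N ^ r * N ^ (s - 2) = N ^ (r + s - 2) := by
    rw [← rpow_natCast, ← rpow_add hN]
    push_cast [Nat.cast_sub hs]
    ring_nf
  calc _ ≤ |r * N ^ (r - s) * (∑ i, y i ^ (s - 1) * z i) ^ 2|
        + |(s - 1) * N ^ r * ∑ i, y i ^ (s - 2) * z i ^ 2| := abs_add_le _ _
    _ = |r| * N ^ (r - s) * |∑ i, y i ^ (s - 1) * z i| ^ 2
        + (s - 1) * N ^ r * ∑ i, y i ^ (s - 2) * z i ^ 2 := by
      rw [abs_mul, abs_mul, abs_mul, abs_mul, abs_pow, abs_of_nonneg hs1,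
        abs_of_pos (rpow_pos_of_pos hN _), abs_of_pos (rpow_pos_of_pos hN _), abs_of_nonneg hH0]
    _ ≤ |r| * N ^ (r - s) * (N ^ (s - 1) * lnorm s z) ^ 2
        + (s - 1) * N ^ r * (N ^ (s - 2) * lnorm s z ^ 2) := by gcongr
    _ = |r| * (N ^ (r - s) * (N ^ (s - 1)) ^ 2) * lnorm s z ^ 2
        + (s - 1) * (N ^ r * N ^ (s - 2)) * lnorm s z ^ 2 := by ring
    _ = _ := by rw [e1, e2]; ring

theorem taylor_lnorm_rpow_of_sub_smul_ne_zero (hs : 2 ≤ s) (hse : Even s) {q : ℝ} (hq : 2 ≤ q)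
    {x z : Fin d → ℝ} {α : ℝ} (hα : 0 ≤ α) (hline : ∀ t ∈ Icc 0 α, x - t • z ≠ 0) :
    |lnorm s (x - α • z) ^ q - lnorm s x ^ q
        + q * α * (lnorm s x ^ (q - (s : ℝ)) * ∑ i, x i ^ (s - 1) * z i)|
      ≤ q * α ^ 2 / 2 * (|q - (s : ℝ)| + ((s : ℝ) - 1)) *
          (lnorm s x + α * lnorm s z) ^ (q - 2) * lnorm s z ^ 2 := by
  have hN : ∀ t ∈ Icc 0 α, lnorm s (x - t • z) ≤ lnorm s x + α * lnorm s z := fun t ht =>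
    (lnorm_sub_smul_le (by omega) x z t).trans (by
      rw [abs_of_nonneg ht.1]; gcongr; exacts [lnorm_nonneg z, ht.2])
  have h := abs_sub_sub_mul_le_of_abs_deriv_deriv_le hα
    (fun t ht => hasDerivAt_lnorm_rpow_sub_smul (by omega) hse (hline t ht) q)
    (fun t ht =>
      (hasDerivAt_lnorm_rpow_mul_sum_sub_smul hs hse (hline t ht) (q - s)).const_mul (-q))
    (M := q * ((|q - (s : ℝ)| + ((s : ℝ) - 1)) *
          (lnorm s x + α * lnorm s z) ^ (q - 2) * lnorm s z ^ 2)) fun t ht => by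
      rw [abs_mul, abs_neg, abs_neg, abs_of_nonneg (by linarith : 0 ≤ q)]
      gcongr q * ?_
      refine (abs_rpow_mul_sum_sq_add_le hs hse (hline t ht) z (q - s)).trans ?_
      rw [show q - s + s - 2 = q - 2 by ring]
      gcongr
      · have : (2 : ℝ) ≤ s := by exact_mod_cast hs
        exact add_nonneg (abs_nonneg _) (by linarith)
      · exact lnorm_nonneg _
      · exact hN t ht
  simp only [zero_smul, sub_zero] at h
  convert h using 2 <;> ring

theorem taylor_lnorm_rpow_smul (hs : 2 ≤ s) (hse : Even s) {q : ℝ} (hq : 2 ≤ q)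
    (a : ℝ) (z : Fin d → ℝ) {α : ℝ} (hα : 0 ≤ α) :
    |lnorm s (a • z - α • z) ^ q - lnorm s (a • z) ^ q
        + q * α * (lnorm s (a • z) ^ (q - (s : ℝ)) * ∑ i, (a • z) i ^ (s - 1) * z i)|
      ≤ q * α ^ 2 / 2 * (|q - (s : ℝ)| + ((s : ℝ) - 1)) *
          (lnorm s (a • z) + α * lnorm s z) ^ (q - 2) * lnorm s z ^ 2 := by
  have hs0 : s ≠ 0 := by omega
  have hq0 : q ≠ 0 := by positivity
  set Z := lnorm s z
  have hZ : 0 ≤ Z := lnorm_nonneg z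
  have hsum : ∑ i, (a • z) i ^ (s - 1) * z i = a ^ (s - 1) * Z ^ s := by
    rw [lnorm_pow hs0, mul_sum]
    refine sum_congr rfl fun i _ => ?_
    rw [Pi.smul_apply, smul_eq_mul, mul_pow, mul_assoc, ← pow_succ, Nat.sub_add_cancel (by omega),
      hse.pow_abs]
  have hZq : Z ^ (q - s) * Z ^ s = Z ^ q := by
    rw [← rpow_natCast, ← rpow_add' hZ (by rwa [sub_add_cancel]), sub_add_cancel]
  have hZq' : Z ^ (q - 2) * Z ^ 2 = Z ^ q := by
    rw [← rpow_natCast, Nat.cast_ofNat, ← rpow_add' hZ (by rwa [sub_add_cancel]), sub_add_cancel]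
  have hlhs : lnorm s (a • z - α • z) ^ q - lnorm s (a • z) ^ q
        + q * α * (lnorm s (a • z) ^ (q - (s : ℝ)) * ∑ i, (a • z) i ^ (s - 1) * z i)
      = (|a - α| ^ q - |a| ^ q + q * α * (|a| ^ (q - 2) * a)) * Z ^ q := by
    rw [← sub_smul, lnorm_smul hs0, lnorm_smul hs0, hsum, mul_rpow (abs_nonneg _) hZ,
      mul_rpow (abs_nonneg _) hZ, mul_rpow (abs_nonneg _) hZ, ← hZq,
      ← abs_rpow_sub_mul_pow_sub_one hs hse q a]
    ring
  have hrhs : (lnorm s (a • z) + α * Z) ^ (q - 2) * Z ^ 2 = (|a| + α) ^ (q - 2) * Z ^ q := by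
    rw [lnorm_smul hs0, ← add_mul, mul_rpow (by positivity) hZ, mul_assoc, hZq']
  have hconst : q - 1 ≤ |q - s| + (s - 1) := by linarith [le_abs_self (q - s)]
  rw [hlhs, abs_mul, abs_of_nonneg (rpow_nonneg hZ q), mul_assoc _ _ (Z ^ 2), hrhs]
  calc _ ≤ q * (q - 1) / 2 * α ^ 2 * (|a| + α) ^ (q - 2) * Z ^ q := by
        gcongr
        exact abs_abs_sub_rpow_sub_add_le hq hα
    _ ≤ _ := by
      rw [← mul_assoc, show q * (q - 1) / 2 * α ^ 2 = q * α ^ 2 / 2 * (q - 1) by ring]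
      gcongr

end lnorm

theorem stmt4 (d s : ℕ) (hs : 2 ≤ s) (hse : Even s) (q : ℝ) (hq : 2 ≤ q)
    (x z : Fin d → ℝ) (α : ℝ) (hα : 0 < α) :
    |lnorm s (x - α • z) ^ q - lnorm s x ^ q
        + q * α * (lnorm s x ^ (q - (s : ℝ)) * ∑ i, x i ^ (s - 1) * z i)|
      ≤ q * α ^ 2 / 2 * (|q - (s : ℝ)| + ((s : ℝ) - 1)) *
          (lnorm s x + α * lnorm s z) ^ (q - 2) * lnorm s z ^ 2 := by
  by_cases hx : ∃ a : ℝ, x = a • z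
  · obtain ⟨a, rfl⟩ := hx
    exact taylor_lnorm_rpow_smul hs hse hq a z hα.le
  · exact taylor_lnorm_rpow_of_sub_smul_ne_zero hs hse hq hα.le
      fun t _ h => hx ⟨t, sub_eq_zero.1 h⟩
end

section
/- Let x_1, ..., x_n be independent mean-zero random vectors in R^d with E|x_i|_∞^q < ∞ for q ≥ 2. Then ‖max_{1≤j≤d} |∑_{i=1}^n x_{ij}|‖_q² ≤ e²(max{q, log d} − 1) ∑_{i=1}^n ‖max_{1≤j≤d} |x_{ij}|‖_q², where x_{ij} denotes the j-th coordinate of x_i. -/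
/-
Write `‖w‖ = (ε ^ s + ∑ j, |w j| ^ s) ^ (1 / s)` for the `ℓ^s` norm of `w` with an extra
coordinate `ε > 0`, which keeps it away from `0` where its powers are not smooth, and take
`s = max q (log d)`. The core is Rio's inequality for this norm: if `u` and `v` are independent and
`v` is centred, then `‖‖u + v‖‖_q² ≤ ‖‖u‖‖_q² + (s - 1) ‖‖v‖_s‖_q²`. For it, let
`H t = E ‖u + t v‖ ^ q` and `M = H ^ (2 / q)`. Independence and `E v = 0` give `M' 0 = 0`.
Because `q ≤ s` and `2 ≤ q`, the squared-first-derivative terms in the second derivatives of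
`‖u + t v‖ ^ q = (‖u + t v‖ ^ s) ^ (q / s)` and of `M` are nonpositive, and Hölder's inequality,
once in `ℓ^s` and once in `L^q`, bounds the rest: `M'' ≤ 2 (s - 1) ‖‖v‖_s‖_q²`. A second-order
Taylor bound on `[0, 1]` gives the inequality. Summing over the `x i`, and comparing
`|w|_∞ ≤ ‖w‖` and `‖v‖_s ≤ d ^ (1 / s) |v|_∞ ≤ e |v|_∞`, gives the theorem in the limit `ε → 0`.
-/

open Finset Real MeasureTheory ProbabilityTheory

theorem integral_rpow_mul_rpow_le {α : Type*} [MeasurableSpace α] {μ : Measure α} {f g : α → ℝ}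
    (hf₀ : 0 ≤ f) (hg₀ : 0 ≤ g) (hf : Integrable f μ) (hg : Integrable g μ) {θ : ℝ}
    (hθ₀ : 0 ≤ θ) (hθ₁ : θ ≤ 1) :
    ∫ a, f a ^ θ * g a ^ (1 - θ) ∂μ ≤ (∫ a, f a ∂μ) ^ θ * (∫ a, g a ∂μ) ^ (1 - θ) := by
  have hθ₁' : 0 ≤ 1 - θ := sub_nonneg.2 hθ₁
  have hprod₀ : ∀ a, 0 ≤ f a ^ θ * g a ^ (1 - θ) := fun a =>
    mul_nonneg (rpow_nonneg (hf₀ a) _) (rpow_nonneg (hg₀ a) _)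
  have holder := ENNReal.lintegral_mul_norm_pow_le (μ := μ) hf.aemeasurable.ennreal_ofReal
    hg.aemeasurable.ennreal_ofReal hθ₀ hθ₁' (add_sub_cancel θ 1)
  rw [← ofReal_integral_eq_lintegral_ofReal hf (.of_forall hf₀),
    ← ofReal_integral_eq_lintegral_ofReal hg (.of_forall hg₀),
    ENNReal.ofReal_rpow_of_nonneg (integral_nonneg hf₀) hθ₀,
    ENNReal.ofReal_rpow_of_nonneg (integral_nonneg hg₀) hθ₁',
    ← ENNReal.ofReal_mul (rpow_nonneg (integral_nonneg hf₀) _)]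
    at holder
  simp only [ENNReal.ofReal_rpow_of_nonneg (hf₀ _) hθ₀, ENNReal.ofReal_rpow_of_nonneg (hg₀ _) hθ₁',
    ← ENNReal.ofReal_mul (rpow_nonneg (hf₀ _) _)] at holder
  rw [integral_eq_lintegral_of_nonneg_ae (.of_forall hprod₀)
    ((hf.aemeasurable.pow_const θ).mul (hg.aemeasurable.pow_const _)).aestronglyMeasurable]
  exact ENNReal.toReal_le_of_le_ofReal
    (mul_nonneg (rpow_nonneg (integral_nonneg hf₀) _) (rpow_nonneg (integral_nonneg hg₀) _)) holder

theorem sum_rpow_mul_rpow_le {ι : Type*} [Fintype ι] {f g : ι → ℝ}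
    (hf₀ : 0 ≤ f) (hg₀ : 0 ≤ g) {θ : ℝ} (hθ₀ : 0 ≤ θ) (hθ₁ : θ ≤ 1) :
    ∑ j, f j ^ θ * g j ^ (1 - θ) ≤ (∑ j, f j) ^ θ * (∑ j, g j) ^ (1 - θ) := by
  let _ : MeasurableSpace ι := ⊤
  simpa using
    integral_rpow_mul_rpow_le (μ := Measure.count) hf₀ hg₀ .of_finite .of_finite hθ₀ hθ₁

theorem integrable_add_rpow_of_nonneg {α : Type*} [MeasurableSpace α] {μ : Measure α}
    {f g : α → ℝ} {p : ℝ} (hp : 0 < p) (hf₀ : 0 ≤ f) (hg₀ : 0 ≤ g)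
    (hfm : AEStronglyMeasurable f μ) (hgm : AEStronglyMeasurable g μ)
    (hf : Integrable (fun a => f a ^ p) μ) (hg : Integrable (fun a => g a ^ p) μ) :
    Integrable (fun a => (f a + g a) ^ p) μ := by
  have hiff : ∀ {h : α → ℝ}, 0 ≤ h → AEStronglyMeasurable h μ →
      (Integrable (fun a => h a ^ p) μ ↔ MemLp h (ENNReal.ofReal p) μ) := fun {h} h₀ hm => by
    rw [← integrable_norm_rpow_iff hm (by simpa using hp) ENNReal.ofReal_ne_top,
      ENNReal.toReal_ofReal hp.le]
    simp only [Real.norm_of_nonneg (h₀ _)]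
  exact (hiff (add_nonneg hf₀ hg₀) (hfm.add hgm)).2
    (((hiff hf₀ hfm).1 hf).add ((hiff hg₀ hgm).1 hg))

theorem hasDerivAt_abs_rpow_mul_self {s : ℝ} (hs : 2 ≤ s) (x : ℝ) :
    HasDerivAt (fun x => |x| ^ (s - 2) * x) ((s - 1) * |x| ^ (s - 2)) x := by
  rcases hs.eq_or_lt with rfl | hs
  · simp only [sub_self, rpow_zero, one_mul]
    exact (hasDerivAt_id' x).congr_deriv (by norm_num)
  rcases eq_or_ne x 0 with rfl | hx
  · rw [hasDerivAt_iff_tendsto_slope_zero]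
    have hcont : Continuous fun t : ℝ => |t| ^ (s - 2) :=
      continuous_abs.rpow_const fun _ => Or.inr (by linarith)
    refine (hcont.tendsto' 0 _ (by simp [zero_rpow (by linarith : s - 2 ≠ 0)])).mono_left
      nhdsWithin_le_nhds |>.congr' ?_
    filter_upwards [self_mem_nhdsWithin] with t (ht : t ≠ 0)
    simp only [zero_add, smul_eq_mul, mul_zero, sub_zero]
    field_simp
  · refine (((hasDerivAt_abs hx).rpow_const (Or.inl (abs_ne_zero.2 hx))).mul
      (hasDerivAt_id x)).congr_deriv ?_
    have := sign_mul_self x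
    rw [rpow_sub_one (abs_ne_zero.2 hx), id]
    field_simp [abs_ne_zero.2 hx]
    linear_combination (s - 2) * this

theorem hasDerivAt_deriv_rpow_const {f f' : ℝ → ℝ} {f'' x : ℝ} (a : ℝ)
    (hf : HasDerivAt f (f' x) x) (hf' : HasDerivAt f' f'' x) (hx : f x ≠ 0) :
    HasDerivAt (fun y => a * f y ^ (a - 1) * f' y)
      (a * (a - 1) * f x ^ (a - 2) * f' x ^ 2 + a * f x ^ (a - 1) * f'') x := by
  refine (((hf.rpow_const (p := a - 1) (Or.inl hx)).const_mul a).mul hf').congr_deriv ?_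
  rw [show a - 1 - 1 = a - 2 by ring]
  ring

theorem mul_rpow_deriv2_le {a g g' g'' : ℝ} (ha₀ : 0 ≤ a) (ha₁ : a ≤ 1) (hg : 0 ≤ g) :
    a * (a - 1) * g ^ (a - 2) * g' ^ 2 + a * g ^ (a - 1) * g'' ≤ a * g ^ (a - 1) * g'' := by
  have := mul_nonneg (mul_nonneg ha₀ (rpow_nonneg hg (a - 2))) (sq_nonneg g')
  nlinarith

theorem rpow_mul_pow_le_rpow {g K W q s : ℝ} (k : ℕ) (hg : 0 < g) (hK : 0 ≤ K)
    (hgW : g ^ (1 / s) ≤ W) (hKW : K ≤ W) (hkq : k ≤ q) :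
    g ^ ((q - k) / s) * K ^ k ≤ W ^ q := by
  have hW : 0 < W := (rpow_pos_of_pos hg _).trans_le hgW
  calc g ^ ((q - k) / s) * K ^ k = (g ^ (1 / s)) ^ (q - k) * K ^ k := by
        rw [← rpow_mul hg.le, one_div_mul_eq_div]
    _ ≤ W ^ (q - k) * W ^ k := by gcongr
    _ = W ^ q := by rw [← rpow_add_natCast hW.ne', sub_add_cancel]

theorem le_add_of_hasDerivAt_of_deriv2_le {f f' f'' : ℝ → ℝ} {C : ℝ}
    (hf : ∀ t ∈ Set.Icc (0 : ℝ) 1, HasDerivAt f (f' t) t)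
    (hf' : ∀ t ∈ Set.Icc (0 : ℝ) 1, HasDerivAt f' (f'' t) t)
    (hf'' : ∀ t ∈ Set.Icc (0 : ℝ) 1, f'' t ≤ 2 * C) :
    f 1 ≤ f 0 + f' 0 + C := by
  have hI : interior (Set.Icc (0 : ℝ) 1) ⊆ Set.Icc 0 1 := interior_subset
  have hslope : AntitoneOn (fun t => f' t - 2 * C * t) (Set.Icc 0 1) := by
    have hd : ∀ t ∈ Set.Icc (0 : ℝ) 1, HasDerivAt (fun t => f' t - 2 * C * t) (f'' t - 2 * C) t :=
      fun t ht => (hf' t ht).sub (by simpa using (hasDerivAt_id t).const_mul (2 * C))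
    exact antitoneOn_of_hasDerivWithinAt_nonpos (convex_Icc 0 1)
      (fun t ht => (hd t ht).continuousAt.continuousWithinAt)
      (fun t ht => (hd t (hI ht)).hasDerivWithinAt) (fun t ht => by linarith [hf'' t (hI ht)])
  have hd : ∀ t ∈ Set.Icc (0 : ℝ) 1,
      HasDerivAt (fun t => f t - f' 0 * t - C * t ^ 2) (f' t - f' 0 - 2 * C * t) t := fun t ht => by
    refine (((hf t ht).sub ((hasDerivAt_id t).const_mul (f' 0))).sub
      ((hasDerivAt_pow 2 t).const_mul C)).congr_deriv ?_
    simp only [mul_one, Nat.cast_ofNat, Nat.add_one_sub_one, pow_one]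
    ring
  have hanti := antitoneOn_of_hasDerivWithinAt_nonpos (convex_Icc 0 1)
    (fun t ht => (hd t ht).continuousAt.continuousWithinAt)
    (fun t ht => (hd t (hI ht)).hasDerivWithinAt)
    (fun t ht => by linarith [hslope (Set.left_mem_Icc.2 zero_le_one) (hI ht) (hI ht).1])
  have := hanti (Set.left_mem_Icc.2 zero_le_one) (Set.right_mem_Icc.2 zero_le_one) zero_le_one
  simp only at this
  linarith

section SmoothLpNorm

variable {ι : Type*} [Fintype ι] {s ε q : ℝ}

noncomputable def smoothLpPow (s ε : ℝ) (w : ι → ℝ) : ℝ := ε ^ s + ∑ j, |w j| ^ s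

noncomputable def vecLpNorm (s : ℝ) (v : ι → ℝ) : ℝ := (∑ j, |v j| ^ s) ^ (1 / s)

noncomputable def lpPowDeriv (s : ℝ) (w v : ι → ℝ) : ℝ := s * ∑ j, |w j| ^ (s - 2) * w j * v j

noncomputable def lpPowDeriv2 (s : ℝ) (w v : ι → ℝ) : ℝ :=
  s * (s - 1) * ∑ j, |w j| ^ (s - 2) * v j ^ 2

@[fun_prop]
theorem measurable_smoothLpPow : Measurable (smoothLpPow (ι := ι) s ε) := by
  unfold smoothLpPow; fun_prop

@[fun_prop]
theorem measurable_vecLpNorm : Measurable (vecLpNorm (ι := ι) s) := by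
  unfold vecLpNorm; fun_prop

@[fun_prop]
theorem Measurable.lpPowDeriv {α : Type*} [MeasurableSpace α] {f g : α → ι → ℝ}
    (hf : Measurable f) (hg : Measurable g) : Measurable fun a => lpPowDeriv s (f a) (g a) := by
  unfold _root_.lpPowDeriv; fun_prop

@[fun_prop]
theorem Measurable.lpPowDeriv2 {α : Type*} [MeasurableSpace α] {f g : α → ι → ℝ}
    (hf : Measurable f) (hg : Measurable g) : Measurable fun a => lpPowDeriv2 s (f a) (g a) := by
  unfold _root_.lpPowDeriv2; fun_prop

theorem smoothLpPow_pos (hε : 0 < ε) (w : ι → ℝ) : 0 < smoothLpPow s ε w := by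
  unfold smoothLpPow; positivity

theorem vecLpNorm_nonneg (s : ℝ) (v : ι → ℝ) : 0 ≤ vecLpNorm s v := by
  unfold vecLpNorm; positivity

theorem le_smoothLpPow_rpow (hs : 0 < s) (hε : 0 ≤ ε) (w : ι → ℝ) :
    ε ≤ smoothLpPow s ε w ^ (1 / s) := by
  rw [one_div, le_rpow_inv_iff_of_pos hε (by unfold smoothLpPow; positivity) hs]
  exact le_add_of_nonneg_right (by positivity)

theorem abs_le_smoothLpPow_rpow (hs : 0 < s) (hε : 0 ≤ ε) (w : ι → ℝ) (j : ι) :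
    |w j| ≤ smoothLpPow s ε w ^ (1 / s) := by
  rw [one_div, le_rpow_inv_iff_of_pos (abs_nonneg _) (by unfold smoothLpPow; positivity) hs]
  exact le_add_of_nonneg_of_le (by positivity)
    (single_le_sum (f := fun j => |w j| ^ s) (fun j _ => by positivity) (mem_univ j))

theorem vecLpNorm_smul (hs : 0 < s) (c : ℝ) (v : ι → ℝ) :
    vecLpNorm s (c • v) = |c| * vecLpNorm s v := by
  simp only [vecLpNorm, Pi.smul_apply, smul_eq_mul, abs_mul,
    mul_rpow (abs_nonneg c) (abs_nonneg _), ← mul_sum]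
  rw [mul_rpow (by positivity) (by positivity), ← rpow_mul (abs_nonneg c),
    mul_one_div_cancel hs.ne', rpow_one]

theorem smoothLpPow_add_smul_rpow_le (hs : 1 ≤ s) (hε : 0 ≤ ε) (y v : ι → ℝ) (c : ℝ) :
    smoothLpPow s ε (y + c • v) ^ (1 / s) ≤ smoothLpPow s ε y ^ (1 / s) + |c| * vecLpNorm s v := by
  have h := Real.Lp_add_le univ (fun o : Option ι => o.elim ε y)
    (fun o => o.elim 0 (c • v)) hs
  simp only [Fintype.sum_option, Option.elim, add_zero, abs_of_nonneg hε, abs_zero,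
    zero_rpow (by linarith : s ≠ 0), zero_add] at h
  rwa [← vecLpNorm_smul (by linarith)]

theorem vecLpNorm_le_card_rpow_mul_iSup (hs : 0 < s) (v : ι → ℝ) :
    vecLpNorm s v ≤ (Fintype.card ι : ℝ) ^ (1 / s) * ⨆ j, |v j| := by
  have hM : 0 ≤ ⨆ j, |v j| := Real.iSup_nonneg fun j => abs_nonneg _
  have hsum : ∑ j, |v j| ^ s ≤ Fintype.card ι * (⨆ j, |v j|) ^ s := by
    refine (sum_le_sum fun j _ => rpow_le_rpow (abs_nonneg _)
      (le_ciSup (Set.finite_range fun j => |v j|).bddAbove j) hs.le).trans_eq ?_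
    rw [sum_const, card_univ, nsmul_eq_mul]
  calc vecLpNorm s v ≤ (Fintype.card ι * (⨆ j, |v j|) ^ s) ^ (1 / s) :=
        rpow_le_rpow (by positivity) hsum (by positivity)
    _ = (Fintype.card ι : ℝ) ^ (1 / s) * ⨆ j, |v j| := by
        rw [mul_rpow (by positivity) (by positivity), ← rpow_mul hM, mul_one_div_cancel hs.ne',
          rpow_one]

theorem vecLpNorm_rpow_le_exp_one_rpow_mul [Nonempty ι] (hs : 0 < s)
    (hlog : log (Fintype.card ι) ≤ s) (hq : 0 ≤ q) (v : ι → ℝ) :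
    vecLpNorm s v ^ q ≤ exp 1 ^ q * (⨆ j, |v j|) ^ q := by
  have hcard : (0 : ℝ) < Fintype.card ι := by exact_mod_cast Fintype.card_pos
  have hM : 0 ≤ ⨆ j, |v j| := Real.iSup_nonneg fun j => abs_nonneg _
  have he : (Fintype.card ι : ℝ) ^ (1 / s) ≤ exp 1 := by
    rw [rpow_def_of_pos hcard, exp_le_exp, mul_one_div, div_le_one hs]
    exact hlog
  rw [← mul_rpow (exp_pos 1).le hM]
  exact rpow_le_rpow (vecLpNorm_nonneg s v)
    ((vecLpNorm_le_card_rpow_mul_iSup hs v).trans (by gcongr)) hq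

theorem hasDerivAt_smoothLpPow_line (hs : 1 < s) (y v : ι → ℝ) (t : ℝ) :
    HasDerivAt (fun t => smoothLpPow s ε (y + t • v)) (lpPowDeriv s (y + t • v) v) t := by
  simp only [smoothLpPow, lpPowDeriv, Pi.add_apply, Pi.smul_apply, smul_eq_mul, mul_sum]
  refine (HasDerivAt.fun_sum fun j _ => ?_).const_add _
  have hline : HasDerivAt (fun t => y j + t * v j) (v j) t := by
    simpa using ((hasDerivAt_id t).mul_const (v j)).const_add (y j)
  exact ((hasDerivAt_abs_rpow _ hs).comp t hline).congr_deriv (by ring)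

theorem hasDerivAt_lpPowDeriv_line (hs : 2 ≤ s) (y v : ι → ℝ) (t : ℝ) :
    HasDerivAt (fun t => lpPowDeriv s (y + t • v) v) (lpPowDeriv2 s (y + t • v) v) t := by
  simp only [lpPowDeriv, lpPowDeriv2, Pi.add_apply, Pi.smul_apply, smul_eq_mul, mul_sum]
  refine HasDerivAt.fun_sum fun j _ => ?_
  have hline : HasDerivAt (fun t => y j + t * v j) (v j) t := by
    simpa using ((hasDerivAt_id t).mul_const (v j)).const_add (y j)
  exact ((((hasDerivAt_abs_rpow_mul_self hs _).comp t hline).mul_const (v j)).const_mul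
    s).congr_deriv (by ring)

theorem sum_abs_rpow_mul_abs_rpow_le (hs : 0 < s) (hε : 0 ≤ ε) (w v : ι → ℝ) {θ : ℝ}
    (hθ₀ : 0 ≤ θ) (hθ₁ : θ ≤ 1) :
    ∑ j, |w j| ^ (s * θ) * |v j| ^ (s * (1 - θ))
      ≤ smoothLpPow s ε w ^ θ * vecLpNorm s v ^ (s * (1 - θ)) := by
  simp only [rpow_mul (abs_nonneg _)]
  refine (sum_rpow_mul_rpow_le (fun j => by positivity) (fun j => by positivity) hθ₀ hθ₁).trans ?_
  rw [vecLpNorm, ← rpow_mul (by positivity), ← mul_assoc, one_div_mul_cancel hs.ne', one_mul]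
  gcongr
  exact le_add_of_nonneg_left (by positivity)

theorem lpPowDeriv2_nonneg (hs : 1 ≤ s) (w v : ι → ℝ) : 0 ≤ lpPowDeriv2 s w v := by
  unfold lpPowDeriv2
  have : 0 ≤ s - 1 := by linarith
  positivity

theorem lpPowDeriv2_le (hs : 2 ≤ s) (hε : 0 ≤ ε) (w v : ι → ℝ) :
    lpPowDeriv2 s w v ≤ s * (s - 1) * smoothLpPow s ε w ^ ((s - 2) / s) * vecLpNorm s v ^ 2 := by
  have hs₀ : 0 < s := by linarith
  have h := sum_abs_rpow_mul_abs_rpow_le hs₀ hε w v (θ := (s - 2) / s) (by positivity)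
    (div_le_one_of_le₀ (by linarith) hs₀.le)
  rw [mul_div_cancel₀ _ hs₀.ne', show s * (1 - (s - 2) / s) = 2 by field_simp; ring] at h
  simp only [rpow_two, sq_abs] at h
  rw [lpPowDeriv2, mul_assoc _ (smoothLpPow s ε w ^ _)]
  exact mul_le_mul_of_nonneg_left h (by nlinarith)

theorem abs_lpPowDeriv_le (hs : 1 < s) (hε : 0 ≤ ε) (w v : ι → ℝ) :
    |lpPowDeriv s w v| ≤ s * smoothLpPow s ε w ^ ((s - 1) / s) * vecLpNorm s v := by
  have hs₀ : 0 < s := by linarith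
  have h := sum_abs_rpow_mul_abs_rpow_le hs₀ hε w v (θ := (s - 1) / s) (by positivity)
    (div_le_one_of_le₀ (by linarith) hs₀.le)
  rw [mul_div_cancel₀ _ hs₀.ne', show s * (1 - (s - 1) / s) = 1 by field_simp; ring] at h
  simp only [rpow_one] at h
  have habs : ∀ j, |(|w j| ^ (s - 2) * w j * v j)| = |w j| ^ (s - 1) * |v j| := fun j => by
    rw [abs_mul, abs_mul, abs_of_nonneg (by positivity),
      ← rpow_add_one' (abs_nonneg _) (by linarith)]
    ring_nf
  rw [lpPowDeriv, abs_mul, abs_of_pos hs₀, mul_assoc]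
  gcongr
  exact (abs_sum_le_sum_abs _ _).trans (by simpa only [habs] using h)

theorem abs_smoothLpPow_rpow_mul_le (hs : 1 < s) (hε : 0 < ε) (w : ι → ℝ) (j : ι) :
    |smoothLpPow s ε w ^ (q / s - 1) * (|w j| ^ (s - 2) * w j)|
      ≤ ε⁻¹ * smoothLpPow s ε w ^ (q / s) := by
  have hs₀ : 0 < s := by linarith
  have hG := smoothLpPow_pos (s := s) hε w
  have hN : ε ≤ smoothLpPow s ε w ^ (1 / s) := le_smoothLpPow_rpow hs₀ hε.le w
  calc |smoothLpPow s ε w ^ (q / s - 1) * (|w j| ^ (s - 2) * w j)|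
      = smoothLpPow s ε w ^ (q / s - 1) * |w j| ^ (s - 1) := by
        rw [abs_mul, abs_mul, abs_of_pos (rpow_pos_of_pos hG _), abs_of_nonneg (by positivity),
          ← rpow_add_one' (abs_nonneg _) (by linarith)]
        ring_nf
    _ ≤ smoothLpPow s ε w ^ (q / s - 1) * (smoothLpPow s ε w ^ (1 / s)) ^ (s - 1) := by
        gcongr
        exact abs_le_smoothLpPow_rpow hs₀ hε.le w j
    _ = smoothLpPow s ε w ^ (q / s) * (smoothLpPow s ε w ^ (1 / s))⁻¹ := by
        rw [← rpow_neg hG.le, ← rpow_mul hG.le, ← rpow_add hG, ← rpow_add hG]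
        congr 1
        field_simp
        ring
    _ ≤ ε⁻¹ * smoothLpPow s ε w ^ (q / s) := by
        rw [mul_comm]
        gcongr

theorem rpow_mul_lpPowDeriv2_le (hs : 2 ≤ s) (hε : 0 < ε) (hq : 0 ≤ q) (w v : ι → ℝ) :
    q / s * smoothLpPow s ε w ^ (q / s - 1) * lpPowDeriv2 s w v
      ≤ q * (s - 1) * smoothLpPow s ε w ^ ((q - 2) / s) * vecLpNorm s v ^ 2 := by
  have hs₀ : 0 < s := by linarith
  have hG := smoothLpPow_pos (s := s) hε w
  calc q / s * smoothLpPow s ε w ^ (q / s - 1) * lpPowDeriv2 s w v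
      ≤ q / s * smoothLpPow s ε w ^ (q / s - 1)
          * (s * (s - 1) * smoothLpPow s ε w ^ ((s - 2) / s) * vecLpNorm s v ^ 2) := by
        gcongr
        exact lpPowDeriv2_le hs hε.le w v
    _ = q * (s - 1) * smoothLpPow s ε w ^ ((q - 2) / s) * vecLpNorm s v ^ 2 := by
        rw [show (q - 2) / s = (q / s - 1) + (s - 2) / s by field_simp; ring, rpow_add hG]
        field_simp

theorem rpow_mul_lpPowDeriv_sq_le (hs : 1 < s) (hε : 0 < ε) (hq : 0 ≤ q) (hqs : q ≤ s)
    (w v : ι → ℝ) :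
    q / s * (1 - q / s) * smoothLpPow s ε w ^ (q / s - 2) * lpPowDeriv s w v ^ 2
      ≤ q * (s - q) * smoothLpPow s ε w ^ ((q - 2) / s) * vecLpNorm s v ^ 2 := by
  have hs₀ : 0 < s := by linarith
  have hG := smoothLpPow_pos (s := s) hε w
  have hderiv := abs_lpPowDeriv_le hs hε.le w v
  have : 0 ≤ 1 - q / s := by linarith [div_le_one_of_le₀ hqs hs₀.le]
  calc q / s * (1 - q / s) * smoothLpPow s ε w ^ (q / s - 2) * lpPowDeriv s w v ^ 2
      ≤ q / s * (1 - q / s) * smoothLpPow s ε w ^ (q / s - 2)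
          * (s * smoothLpPow s ε w ^ ((s - 1) / s) * vecLpNorm s v) ^ 2 := by
        exact mul_le_mul_of_nonneg_left (sq_le_sq' (abs_le.1 hderiv).1 (abs_le.1 hderiv).2)
          (by positivity)
    _ = q * (s - q) * smoothLpPow s ε w ^ ((q - 2) / s) * vecLpNorm s v ^ 2 := by
        rw [show (q - 2) / s = (q / s - 2) + ((s - 1) / s + (s - 1) / s) by field_simp; ring,
          rpow_add hG, rpow_add hG]
        field_simp

noncomputable def linePow (s q ε : ℝ) (y v : ι → ℝ) (t : ℝ) : ℝ :=
  smoothLpPow s ε (y + t • v) ^ (q / s)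

noncomputable def linePowDeriv (s q ε : ℝ) (y v : ι → ℝ) (t : ℝ) : ℝ :=
  q / s * smoothLpPow s ε (y + t • v) ^ (q / s - 1) * lpPowDeriv s (y + t • v) v

noncomputable def linePowDeriv2 (s q ε : ℝ) (y v : ι → ℝ) (t : ℝ) : ℝ :=
  q / s * (q / s - 1) * smoothLpPow s ε (y + t • v) ^ (q / s - 2) * lpPowDeriv s (y + t • v) v ^ 2
    + q / s * smoothLpPow s ε (y + t • v) ^ (q / s - 1) * lpPowDeriv2 s (y + t • v) v

theorem hasDerivAt_linePow (hs : 1 < s) (hε : 0 < ε) (y v : ι → ℝ) (t : ℝ) :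
    HasDerivAt (linePow s q ε y v) (linePowDeriv s q ε y v t) t :=
  ((hasDerivAt_smoothLpPow_line hs y v t).rpow_const
    (Or.inl (smoothLpPow_pos hε _).ne')).congr_deriv (by unfold linePowDeriv; ring)

theorem hasDerivAt_linePowDeriv (hs : 2 ≤ s) (hε : 0 < ε) (y v : ι → ℝ) (t : ℝ) :
    HasDerivAt (linePowDeriv s q ε y v) (linePowDeriv2 s q ε y v t) t :=
  hasDerivAt_deriv_rpow_const (q / s) (hasDerivAt_smoothLpPow_line (by linarith) y v t)
    (hasDerivAt_lpPowDeriv_line hs y v t) (smoothLpPow_pos hε _).ne'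

/-- Its `q`-th power dominates, for `|t| ≤ 2`, every integrand that is differentiated under the
integral sign below; `(-2, 2)` is an open neighbourhood of `[0, 1]`. -/
noncomputable def lineBound (s ε : ℝ) (y v : ι → ℝ) : ℝ :=
  smoothLpPow s ε y ^ (1 / s) + 2 * vecLpNorm s v

theorem vecLpNorm_le_lineBound (hε : 0 ≤ ε) (y v : ι → ℝ) : vecLpNorm s v ≤ lineBound s ε y v := by
  have : 0 ≤ smoothLpPow s ε y := by unfold smoothLpPow; positivity
  unfold lineBound
  linarith [rpow_nonneg this (1 / s), vecLpNorm_nonneg s v]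

theorem smoothLpPow_line_rpow_le (hs : 1 ≤ s) (hε : 0 ≤ ε) (y v : ι → ℝ) {t : ℝ} (ht : |t| ≤ 2) :
    smoothLpPow s ε (y + t • v) ^ (1 / s) ≤ lineBound s ε y v :=
  (smoothLpPow_add_smul_rpow_le hs hε y v t).trans
    (by rw [lineBound]; gcongr; exact vecLpNorm_nonneg s v)

theorem linePow_le (hs : 1 ≤ s) (hε : 0 ≤ ε) (hq : 0 ≤ q) (y v : ι → ℝ) {t : ℝ} (ht : |t| ≤ 2) :
    linePow s q ε y v t ≤ lineBound s ε y v ^ q := by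
  have hG : 0 ≤ smoothLpPow s ε (y + t • v) := by unfold smoothLpPow; positivity
  rw [linePow, ← one_div_mul_eq_div, rpow_mul hG]
  exact rpow_le_rpow (by positivity) (smoothLpPow_line_rpow_le hs hε y v ht) hq

theorem abs_linePowDeriv_le (hs : 1 < s) (hε : 0 < ε) (hq : 1 ≤ q) (y v : ι → ℝ) {t : ℝ}
    (ht : |t| ≤ 2) :
    |linePowDeriv s q ε y v t| ≤ q * lineBound s ε y v ^ q := by
  have hs₀ : 0 < s := by linarith
  set G := smoothLpPow s ε (y + t • v)
  have hG : 0 < G := smoothLpPow_pos hε _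
  calc |linePowDeriv s q ε y v t|
      ≤ q / s * G ^ (q / s - 1) * (s * G ^ ((s - 1) / s) * vecLpNorm s v) := by
        rw [linePowDeriv, abs_mul, abs_of_nonneg (by positivity)]
        exact mul_le_mul_of_nonneg_left (abs_lpPowDeriv_le hs hε.le _ v) (by positivity)
    _ = q * (G ^ ((q - 1) / s) * vecLpNorm s v) := by
        rw [show (q - 1) / s = (q / s - 1) + (s - 1) / s by field_simp; ring, rpow_add hG]
        field_simp
    _ ≤ q * lineBound s ε y v ^ q := by
        gcongr
        simpa using rpow_mul_pow_le_rpow 1 hG (vecLpNorm_nonneg s v)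
          (smoothLpPow_line_rpow_le hs.le hε.le y v ht) (vecLpNorm_le_lineBound hε.le y v)
          (by simpa using hq)

theorem linePowDeriv2_le (hs : 2 ≤ s) (hε : 0 < ε) (hq : 0 ≤ q) (hqs : q ≤ s) (y v : ι → ℝ)
    (t : ℝ) :
    linePowDeriv2 s q ε y v t
      ≤ q * (s - 1) * smoothLpPow s ε (y + t • v) ^ ((q - 2) / s) * vecLpNorm s v ^ 2 :=
  (mul_rpow_deriv2_le (by positivity) (div_le_one_of_le₀ hqs (by linarith))
    (smoothLpPow_pos hε _).le).trans (rpow_mul_lpPowDeriv2_le hs hε hq _ v)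

theorem abs_linePowDeriv2_le (hs : 2 ≤ s) (hε : 0 < ε) (hq : 2 ≤ q) (hqs : q ≤ s) (y v : ι → ℝ)
    {t : ℝ} (ht : |t| ≤ 2) :
    |linePowDeriv2 s q ε y v t|
      ≤ 2 * q * s * lineBound s ε y v ^ q := by
  have hG := smoothLpPow_pos (s := s) hε (y + t • v)
  have h₁ := rpow_mul_lpPowDeriv_sq_le (by linarith) hε (by linarith) hqs (y + t • v) v
  have h₂ := rpow_mul_lpPowDeriv2_le (q := q) hs hε (by linarith) (y + t • v) v
  have h₁₀ : 0 ≤ q / s * (1 - q / s) * smoothLpPow s ε (y + t • v) ^ (q / s - 2)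
      * lpPowDeriv s (y + t • v) v ^ 2 := by
    have : 0 ≤ 1 - q / s := by linarith [div_le_one_of_le₀ hqs (by linarith : (0 : ℝ) ≤ s)]
    positivity
  have h₂₀ : 0 ≤ q / s * smoothLpPow s ε (y + t • v) ^ (q / s - 1) * lpPowDeriv2 s (y + t • v) v :=
    mul_nonneg (by positivity) (lpPowDeriv2_nonneg (by linarith) _ v)
  have hW : smoothLpPow s ε (y + t • v) ^ ((q - 2) / s) * vecLpNorm s v ^ 2
      ≤ lineBound s ε y v ^ q := by
    simpa using rpow_mul_pow_le_rpow 2 hG (vecLpNorm_nonneg s v)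
      (smoothLpPow_line_rpow_le (by linarith) hε.le y v ht) (vecLpNorm_le_lineBound hε.le y v)
      (by simpa using hq)
  have hX : 0 ≤ (q * q + q)
      * (smoothLpPow s ε (y + t • v) ^ ((q - 2) / s) * vecLpNorm s v ^ 2) := by
    positivity
  have hqsW := mul_le_mul_of_nonneg_left hW (by positivity : (0 : ℝ) ≤ 2 * q * s)
  rw [linePowDeriv2, abs_le]
  constructor <;> linarith

section Expectation

variable {Ω : Type*} [MeasurableSpace Ω] {μ : Measure Ω} {u v : Ω → ι → ℝ}

@[fun_prop]
theorem Measurable.linePow (hu : Measurable u) (hv : Measurable v) (t : ℝ) :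
    Measurable fun ω => linePow s q ε (u ω) (v ω) t := by
  unfold _root_.linePow; fun_prop

@[fun_prop]
theorem Measurable.linePowDeriv (hu : Measurable u) (hv : Measurable v) (t : ℝ) :
    Measurable fun ω => linePowDeriv s q ε (u ω) (v ω) t := by
  unfold _root_.linePowDeriv; fun_prop

@[fun_prop]
theorem Measurable.linePowDeriv2 (hu : Measurable u) (hv : Measurable v) (t : ℝ) :
    Measurable fun ω => linePowDeriv2 s q ε (u ω) (v ω) t := by
  unfold _root_.linePowDeriv2; fun_prop

theorem integrable_lineBound_rpow (hε : 0 ≤ ε) (hq : 0 < q) (hu : Measurable u)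
    (hv : Measurable v) (hIu : Integrable (fun ω => smoothLpPow s ε (u ω) ^ (q / s)) μ)
    (hIv : Integrable (fun ω => vecLpNorm s (v ω) ^ q) μ) :
    Integrable (fun ω => lineBound s ε (u ω) (v ω) ^ q) μ := by
  have hG : ∀ ω, 0 ≤ smoothLpPow s ε (u ω) := fun ω => by unfold smoothLpPow; positivity
  refine integrable_add_rpow_of_nonneg hq (fun ω => rpow_nonneg (hG ω) _)
    (fun ω => mul_nonneg zero_le_two (vecLpNorm_nonneg s _)) (Measurable.aestronglyMeasurable
      (by fun_prop)) (Measurable.aestronglyMeasurable (by fun_prop))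
    (hIu.congr (.of_forall fun ω => ?_)) ((hIv.const_mul (2 ^ q)).congr (.of_forall fun ω => ?_))
  · simp only [← rpow_mul (hG ω), one_div_mul_eq_div]
  · simp only [mul_rpow zero_le_two (vecLpNorm_nonneg s _)]

theorem integrable_linePow (hs : 1 ≤ s) (hε : 0 ≤ ε) (hq : 0 < q) (hu : Measurable u)
    (hv : Measurable v) (hIu : Integrable (fun ω => smoothLpPow s ε (u ω) ^ (q / s)) μ)
    (hIv : Integrable (fun ω => vecLpNorm s (v ω) ^ q) μ) {t : ℝ} (ht : |t| ≤ 2) :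
    Integrable (fun ω => linePow s q ε (u ω) (v ω) t) μ :=
  (integrable_lineBound_rpow hε hq hu hv hIu hIv).mono' (hu.linePow hv t).aestronglyMeasurable <|
    .of_forall fun ω => by
      rw [Real.norm_of_nonneg (by unfold _root_.linePow smoothLpPow; positivity)]
      exact linePow_le hs hε hq.le _ _ ht

theorem integrable_linePowDeriv (hs : 1 < s) (hε : 0 < ε) (hq : 1 ≤ q) (hu : Measurable u)
    (hv : Measurable v) (hIu : Integrable (fun ω => smoothLpPow s ε (u ω) ^ (q / s)) μ)
    (hIv : Integrable (fun ω => vecLpNorm s (v ω) ^ q) μ) {t : ℝ} (ht : |t| ≤ 2) :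
    Integrable (fun ω => linePowDeriv s q ε (u ω) (v ω) t) μ :=
  ((integrable_lineBound_rpow hε.le (by linarith) hu hv hIu hIv).const_mul q).mono'
    (hu.linePowDeriv hv t).aestronglyMeasurable
    (.of_forall fun ω => abs_linePowDeriv_le hs hε hq _ _ ht)

theorem integrable_linePowDeriv2 (hs : 2 ≤ s) (hε : 0 < ε) (hq : 2 ≤ q) (hqs : q ≤ s)
    (hu : Measurable u) (hv : Measurable v)
    (hIu : Integrable (fun ω => smoothLpPow s ε (u ω) ^ (q / s)) μ)
    (hIv : Integrable (fun ω => vecLpNorm s (v ω) ^ q) μ) {t : ℝ} (ht : |t| ≤ 2) :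
    Integrable (fun ω => linePowDeriv2 s q ε (u ω) (v ω) t) μ :=
  ((integrable_lineBound_rpow hε.le (by linarith) hu hv hIu hIv).const_mul (2 * q * s)).mono'
    (hu.linePowDeriv2 hv t).aestronglyMeasurable
    (.of_forall fun ω => abs_linePowDeriv2_le hs hε hq hqs _ _ ht)

theorem hasDerivAt_integral_linePow (hs : 1 < s) (hε : 0 < ε) (hq : 1 ≤ q) (hu : Measurable u)
    (hv : Measurable v) (hIu : Integrable (fun ω => smoothLpPow s ε (u ω) ^ (q / s)) μ)
    (hIv : Integrable (fun ω => vecLpNorm s (v ω) ^ q) μ) {t : ℝ} (ht : t ∈ Set.Ioo (-2) 2) :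
    HasDerivAt (fun t => ∫ ω, linePow s q ε (u ω) (v ω) t ∂μ)
      (∫ ω, linePowDeriv s q ε (u ω) (v ω) t ∂μ) t :=
  (hasDerivAt_integral_of_dominated_loc_of_deriv_le (isOpen_Ioo.mem_nhds ht)
    (.of_forall fun t => (by fun_prop : Measurable _).aestronglyMeasurable)
    (integrable_linePow hs.le hε.le (by linarith) hu hv hIu hIv (abs_le.2 ⟨ht.1.le, ht.2.le⟩))
    (by fun_prop : Measurable _).aestronglyMeasurable
    (.of_forall fun ω t ht => abs_linePowDeriv_le hs hε hq _ _ (abs_le.2 ⟨ht.1.le, ht.2.le⟩))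
    ((integrable_lineBound_rpow hε.le (by linarith) hu hv hIu hIv).const_mul q)
    (.of_forall fun ω t _ => hasDerivAt_linePow hs hε _ _ t)).2

theorem hasDerivAt_integral_linePowDeriv (hs : 2 ≤ s) (hε : 0 < ε) (hq : 2 ≤ q) (hqs : q ≤ s)
    (hu : Measurable u) (hv : Measurable v)
    (hIu : Integrable (fun ω => smoothLpPow s ε (u ω) ^ (q / s)) μ)
    (hIv : Integrable (fun ω => vecLpNorm s (v ω) ^ q) μ) {t : ℝ} (ht : t ∈ Set.Ioo (-2) 2) :
    HasDerivAt (fun t => ∫ ω, linePowDeriv s q ε (u ω) (v ω) t ∂μ)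
      (∫ ω, linePowDeriv2 s q ε (u ω) (v ω) t ∂μ) t :=
  (hasDerivAt_integral_of_dominated_loc_of_deriv_le (isOpen_Ioo.mem_nhds ht)
    (.of_forall fun t => (by fun_prop : Measurable _).aestronglyMeasurable)
    (integrable_linePowDeriv (by linarith) hε (by linarith) hu hv hIu hIv
      (abs_le.2 ⟨ht.1.le, ht.2.le⟩))
    (by fun_prop : Measurable _).aestronglyMeasurable
    (.of_forall fun ω t ht => abs_linePowDeriv2_le hs hε hq hqs _ _ (abs_le.2 ⟨ht.1.le, ht.2.le⟩))
    ((integrable_lineBound_rpow hε.le (by linarith) hu hv hIu hIv).const_mul (2 * q * s))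
    (.of_forall fun ω t _ => hasDerivAt_linePowDeriv hs hε _ _ t)).2

theorem rpow_le_integral_linePow [IsProbabilityMeasure μ] (hs : 1 ≤ s) (hε : 0 ≤ ε) (hq : 0 < q)
    (hu : Measurable u) (hv : Measurable v)
    (hIu : Integrable (fun ω => smoothLpPow s ε (u ω) ^ (q / s)) μ)
    (hIv : Integrable (fun ω => vecLpNorm s (v ω) ^ q) μ) {t : ℝ} (ht : |t| ≤ 2) :
    ε ^ q ≤ ∫ ω, linePow s q ε (u ω) (v ω) t ∂μ := by
  calc ε ^ q = ∫ _, ε ^ q ∂μ := by simp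
    _ ≤ ∫ ω, linePow s q ε (u ω) (v ω) t ∂μ :=
        integral_mono (integrable_const _) (integrable_linePow hs hε hq hu hv hIu hIv ht)
          fun ω => by
          rw [linePow, ← one_div_mul_eq_div, rpow_mul (by unfold smoothLpPow; positivity)]
          exact rpow_le_rpow hε (le_smoothLpPow_rpow (by linarith) hε _) hq.le

theorem integral_linePowDeriv_zero (hs : 1 < s) (hε : 0 < ε) (hu : Measurable u)
    (hind : IndepFun u v μ) (hvint : ∀ j, Integrable (fun ω => v ω j) μ)
    (hvmean : ∀ j, ∫ ω, v ω j ∂μ = 0)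
    (hIu : Integrable (fun ω => smoothLpPow s ε (u ω) ^ (q / s)) μ) :
    ∫ ω, linePowDeriv s q ε (u ω) (v ω) 0 ∂μ = 0 := by
  set Φ : ι → (ι → ℝ) → ℝ := fun j w => smoothLpPow s ε w ^ (q / s - 1) * (|w j| ^ (s - 2) * w j)
  have hΦ : ∀ j, Measurable (Φ j) := fun j => by fun_prop
  have hindep : ∀ j, IndepFun (fun ω => Φ j (u ω)) (fun ω => v ω j) μ := fun j =>
    hind.comp (hΦ j) (measurable_pi_apply j)
  have hΦint : ∀ j, Integrable (fun ω => Φ j (u ω)) μ := fun j =>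
    (hIu.const_mul ε⁻¹).mono' ((hΦ j).comp hu).aestronglyMeasurable
      (.of_forall fun ω => abs_smoothLpPow_rpow_mul_le hs hε (u ω) j)
  have hexpand : ∀ ω, linePowDeriv s q ε (u ω) (v ω) 0 = ∑ j, q * (Φ j (u ω) * v ω j) := fun ω => by
    simp only [linePowDeriv, lpPowDeriv, zero_smul, add_zero, Φ, mul_sum]
    refine sum_congr rfl fun j _ => ?_
    field_simp
  have hint : ∀ j, Integrable (fun ω => q * (Φ j (u ω) * v ω j)) μ := fun j =>
    ((hindep j).integrable_mul (hΦint j) (hvint j)).const_mul q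
  rw [integral_congr_ae (.of_forall hexpand), integral_finsetSum _ fun j _ => hint j]
  refine sum_eq_zero fun j _ => ?_
  rw [integral_const_mul, (hindep j).integral_fun_mul_eq_mul_integral (hΦint j).1 (hvint j).1,
    hvmean j, mul_zero, mul_zero]

theorem integral_linePowDeriv2_le (hs : 2 ≤ s) (hε : 0 < ε) (hq : 2 ≤ q) (hqs : q ≤ s)
    (hu : Measurable u) (hv : Measurable v)
    (hIu : Integrable (fun ω => smoothLpPow s ε (u ω) ^ (q / s)) μ)
    (hIv : Integrable (fun ω => vecLpNorm s (v ω) ^ q) μ) {t : ℝ} (ht : |t| ≤ 2) :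
    ∫ ω, linePowDeriv2 s q ε (u ω) (v ω) t ∂μ
      ≤ q * (s - 1) * ((∫ ω, linePow s q ε (u ω) (v ω) t ∂μ) ^ (1 - 2 / q)
        * (∫ ω, vecLpNorm s (v ω) ^ q ∂μ) ^ (2 / q)) := by
  have hθ₀ : 0 ≤ 1 - 2 / q := by rw [sub_nonneg, div_le_one₀ (by linarith)]; exact hq
  have hθ₁ : 1 - 2 / q ≤ 1 := by linarith [div_nonneg zero_le_two (by linarith : (0 : ℝ) ≤ q)]
  have hf₀ : ∀ ω, 0 ≤ linePow s q ε (u ω) (v ω) t := fun ω => by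
    unfold linePow smoothLpPow; positivity
  have hg₀ : ∀ ω, 0 ≤ vecLpNorm s (v ω) ^ q := fun ω => rpow_nonneg (vecLpNorm_nonneg s _) q
  have hf := integrable_linePow (by linarith) hε.le (by linarith) hu hv hIu hIv ht
  have hpt : ∀ ω, linePowDeriv2 s q ε (u ω) (v ω) t ≤ q * (s - 1) *
      (linePow s q ε (u ω) (v ω) t ^ (1 - 2 / q) * (vecLpNorm s (v ω) ^ q) ^ (2 / q)) := fun ω => by
    refine (linePowDeriv2_le hs hε (by linarith) hqs _ _ t).trans_eq ?_
    rw [linePow, ← rpow_mul (smoothLpPow_pos hε _).le, ← rpow_mul (vecLpNorm_nonneg s _),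
      show q / s * (1 - 2 / q) = (q - 2) / s by field_simp, show q * (2 / q) = 2 by field_simp,
      rpow_two]
    ring
  have hyoung : Integrable (fun ω =>
      linePow s q ε (u ω) (v ω) t ^ (1 - 2 / q) * (vecLpNorm s (v ω) ^ q) ^ (2 / q)) μ := by
    refine ((hf.const_mul (1 - 2 / q)).add (hIv.const_mul (2 / q))).mono'
      (by fun_prop : Measurable _).aestronglyMeasurable (.of_forall fun ω => ?_)
    rw [Real.norm_of_nonneg (by have := hf₀ ω; have := hg₀ ω; positivity)]
    exact geom_mean_le_arith_mean2_weighted hθ₀ (by positivity) (hf₀ ω) (hg₀ ω) (by ring)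
  have hholder := integral_rpow_mul_rpow_le hf₀ hg₀ hf hIv hθ₀ hθ₁
  rw [sub_sub_cancel] at hholder
  calc ∫ ω, linePowDeriv2 s q ε (u ω) (v ω) t ∂μ
      ≤ ∫ ω, q * (s - 1) * (linePow s q ε (u ω) (v ω) t ^ (1 - 2 / q)
          * (vecLpNorm s (v ω) ^ q) ^ (2 / q)) ∂μ :=
        integral_mono (integrable_linePowDeriv2 hs hε hq hqs hu hv hIu hIv ht)
          (hyoung.const_mul _) hpt
    _ ≤ _ := by
        rw [integral_const_mul]
        exact mul_le_mul_of_nonneg_left hholder (by nlinarith)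

theorem rpow_integral_smoothLpPow_add_le [IsProbabilityMeasure μ] (hs : 2 ≤ s) (hq : 2 ≤ q)
    (hqs : q ≤ s) (hε : 0 < ε) (hu : Measurable u) (hv : Measurable v) (hind : IndepFun u v μ)
    (hvint : ∀ j, Integrable (fun ω => v ω j) μ) (hvmean : ∀ j, ∫ ω, v ω j ∂μ = 0)
    (hIu : Integrable (fun ω => smoothLpPow s ε (u ω) ^ (q / s)) μ)
    (hIv : Integrable (fun ω => vecLpNorm s (v ω) ^ q) μ) :
    (∫ ω, smoothLpPow s ε (u ω + v ω) ^ (q / s) ∂μ) ^ (2 / q)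
      ≤ (∫ ω, smoothLpPow s ε (u ω) ^ (q / s) ∂μ) ^ (2 / q)
        + (s - 1) * (∫ ω, vecLpNorm s (v ω) ^ q ∂μ) ^ (2 / q) := by
  set H := fun t => ∫ ω, linePow s q ε (u ω) (v ω) t ∂μ
  set H' := fun t => ∫ ω, linePowDeriv s q ε (u ω) (v ω) t ∂μ
  set H'' := fun t => ∫ ω, linePowDeriv2 s q ε (u ω) (v ω) t ∂μ
  set V := (∫ ω, vecLpNorm s (v ω) ^ q ∂μ) ^ (2 / q)
  have hIoo : ∀ t ∈ Set.Icc (0 : ℝ) 1, t ∈ Set.Ioo (-2) 2 := fun t ht =>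
    ⟨by linarith [ht.1], by linarith [ht.2]⟩
  have habs : ∀ t ∈ Set.Icc (0 : ℝ) 1, |t| ≤ 2 := fun t ht =>
    abs_le.2 ⟨by linarith [ht.1], by linarith [ht.2]⟩
  have hH : ∀ t ∈ Set.Icc (0 : ℝ) 1, 0 < H t := fun t ht => (rpow_pos_of_pos hε q).trans_le
    (rpow_le_integral_linePow (by linarith) hε.le (by linarith) hu hv hIu hIv (habs t ht))
  have hH' : ∀ t ∈ Set.Icc (0 : ℝ) 1, HasDerivAt H (H' t) t := fun t ht =>
    hasDerivAt_integral_linePow (by linarith) hε (by linarith) hu hv hIu hIv (hIoo t ht)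
  have hH'' : ∀ t ∈ Set.Icc (0 : ℝ) 1, HasDerivAt H' (H'' t) t := fun t ht =>
    hasDerivAt_integral_linePowDeriv hs hε hq hqs hu hv hIu hIv (hIoo t ht)
  have hM'' : ∀ t ∈ Set.Icc (0 : ℝ) 1, 2 / q * (2 / q - 1) * H t ^ (2 / q - 2) * H' t ^ 2
      + 2 / q * H t ^ (2 / q - 1) * H'' t ≤ 2 * ((s - 1) * V) := fun t ht => by
    calc _ ≤ 2 / q * H t ^ (2 / q - 1) * H'' t :=
          mul_rpow_deriv2_le (by positivity) (div_le_one_of_le₀ hq (by linarith)) (hH t ht).le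
      _ ≤ 2 / q * H t ^ (2 / q - 1) * (q * (s - 1) * (H t ^ (1 - 2 / q) * V)) :=
          mul_le_mul_of_nonneg_left
            (integral_linePowDeriv2_le hs hε hq hqs hu hv hIu hIv (habs t ht))
            (mul_nonneg (by positivity) (rpow_nonneg (hH t ht).le _))
      _ = 2 * ((s - 1) * V) := by
          rw [show 2 / q * H t ^ (2 / q - 1) * (q * (s - 1) * (H t ^ (1 - 2 / q) * V))
              = 2 / q * q * (s - 1) * V * (H t ^ (2 / q - 1) * H t ^ (1 - 2 / q)) by ring,
            ← rpow_add (hH t ht), show 2 / q - 1 + (1 - 2 / q) = 0 by ring, rpow_zero]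
          field_simp
  have key := le_add_of_hasDerivAt_of_deriv2_le (f := fun t => H t ^ (2 / q))
    (f' := fun t => 2 / q * H t ^ (2 / q - 1) * H' t)
    (fun t ht => ((hH' t ht).rpow_const (Or.inl (hH t ht).ne')).congr_deriv (by ring))
    (fun t ht => hasDerivAt_deriv_rpow_const _ (hH' t ht) (hH'' t ht) (hH t ht).ne') hM''
  simpa [H, H', linePow, integral_linePowDeriv_zero (by linarith) hε hu hind hvint hvmean hIu]
    using key

theorem integrable_smoothLpPow_sum_rpow [IsFiniteMeasure μ] {κ : Type*} (hs : 1 ≤ s)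
    (hε : 0 ≤ ε) (hq : 0 < q) {x : κ → Ω → ι → ℝ} (hx : ∀ i, Measurable (x i))
    (hIx : ∀ i, Integrable (fun ω => vecLpNorm s (x i ω) ^ q) μ) (T : Finset κ) :
    Integrable (fun ω => smoothLpPow s ε (∑ i ∈ T, x i ω) ^ (q / s)) μ := by
  induction T using Finset.cons_induction with
  | empty => simp
  | cons a T ha ih =>
    simp only [sum_cons, add_comm (x a _)]
    simpa [linePow] using integrable_linePow (t := 1) hs hε hq
      (Finset.measurable_sum T fun i _ => hx i) (hx a) ih (hIx a) (by norm_num)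

theorem rpow_integral_smoothLpPow_sum_le [IsProbabilityMeasure μ] {κ : Type*} (hs : 2 ≤ s)
    (hq : 2 ≤ q) (hqs : q ≤ s) (hε : 0 < ε) {x : κ → Ω → ι → ℝ} (hx : ∀ i, Measurable (x i))
    (hindep : iIndepFun x μ) (hint : ∀ i j, Integrable (fun ω => x i ω j) μ)
    (hmean : ∀ i j, ∫ ω, x i ω j ∂μ = 0)
    (hIx : ∀ i, Integrable (fun ω => vecLpNorm s (x i ω) ^ q) μ) (T : Finset κ) :
    (∫ ω, smoothLpPow s ε (∑ i ∈ T, x i ω) ^ (q / s) ∂μ) ^ (2 / q)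
      ≤ ε ^ 2 + (s - 1) * ∑ i ∈ T, (∫ ω, vecLpNorm s (x i ω) ^ q ∂μ) ^ (2 / q) := by
  induction T using Finset.cons_induction with
  | empty =>
    have hzero : smoothLpPow s ε (0 : ι → ℝ) ^ (q / s) = ε ^ q := by
      simp only [smoothLpPow, Pi.zero_apply, abs_zero, zero_rpow (by linarith : s ≠ 0),
        sum_const_zero, add_zero, ← rpow_mul hε.le]
      field_simp
    simp only [sum_empty, hzero, integral_const, probReal_univ, one_smul, mul_zero, add_zero,
      ← rpow_mul hε.le]
    field_simp
    rw [rpow_two]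
  | cons a T ha ih =>
    have hu : Measurable fun ω => ∑ i ∈ T, x i ω := Finset.measurable_sum T fun i _ => hx i
    have hind : IndepFun (fun ω => ∑ i ∈ T, x i ω) (x a) μ := by
      simpa only [Finset.sum_fn] using hindep.indepFun_finsetSum_of_notMem hx ha
    simp only [sum_cons, add_comm (x a _)]
    calc _ ≤ _ := rpow_integral_smoothLpPow_add_le hs hq hqs hε hu (hx a) hind (hint a) (hmean a)
          (integrable_smoothLpPow_sum_rpow (by linarith) hε.le (by linarith) hx hIx T) (hIx a)
      _ ≤ _ := by linarith

theorem integrable_vecLpNorm_rpow [Nonempty ι] (hs : 0 < s) (hlog : log (Fintype.card ι) ≤ s)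
    (hq : 0 ≤ q) {v : Ω → ι → ℝ} (hv : Measurable v)
    (hmom : Integrable (fun ω => (⨆ j, |v ω j|) ^ q) μ) :
    Integrable (fun ω => vecLpNorm s (v ω) ^ q) μ :=
  (hmom.const_mul (exp 1 ^ q)).mono' (by fun_prop : Measurable _).aestronglyMeasurable
    (.of_forall fun ω => by
      rw [Real.norm_of_nonneg (rpow_nonneg (vecLpNorm_nonneg s _) q)]
      exact vecLpNorm_rpow_le_exp_one_rpow_mul hs hlog hq (v ω))

theorem integral_vecLpNorm_rpow_le [Nonempty ι] (hs : 0 < s) (hlog : log (Fintype.card ι) ≤ s)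
    (hq : 0 < q) {v : Ω → ι → ℝ} (hmom : Integrable (fun ω => (⨆ j, |v ω j|) ^ q) μ) :
    (∫ ω, vecLpNorm s (v ω) ^ q ∂μ) ^ (2 / q)
      ≤ exp 1 ^ 2 * ((∫ ω, (⨆ j, |v ω j|) ^ q ∂μ) ^ (1 / q)) ^ 2 := by
  have hM : 0 ≤ ∫ ω, (⨆ j, |v ω j|) ^ q ∂μ :=
    integral_nonneg fun ω => rpow_nonneg (Real.iSup_nonneg fun j => abs_nonneg _) q
  calc (∫ ω, vecLpNorm s (v ω) ^ q ∂μ) ^ (2 / q)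
      ≤ (exp 1 ^ q * ∫ ω, (⨆ j, |v ω j|) ^ q ∂μ) ^ (2 / q) := by
        rw [← integral_const_mul]
        exact rpow_le_rpow (integral_nonneg fun ω => rpow_nonneg (vecLpNorm_nonneg s _) q)
          (integral_mono_of_nonneg (.of_forall fun ω => rpow_nonneg (vecLpNorm_nonneg s _) q)
            (hmom.const_mul _) (.of_forall fun ω =>
              vecLpNorm_rpow_le_exp_one_rpow_mul hs hlog hq.le (v ω))) (by positivity)
    _ = exp 1 ^ 2 * ((∫ ω, (⨆ j, |v ω j|) ^ q ∂μ) ^ (1 / q)) ^ 2 := by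
        rw [mul_rpow (by positivity) hM, ← rpow_mul (exp_pos 1).le, ← rpow_mul_natCast hM,
          mul_div_cancel₀ _ hq.ne', rpow_two]
        ring_nf

theorem integral_iSup_abs_rpow_le [Nonempty ι] (hs : 0 < s) (hε : 0 ≤ ε) (hq : 0 < q)
    {w : Ω → ι → ℝ} (hI : Integrable (fun ω => smoothLpPow s ε (w ω) ^ (q / s)) μ) :
    ((∫ ω, (⨆ j, |w ω j|) ^ q ∂μ) ^ (1 / q)) ^ 2
      ≤ (∫ ω, smoothLpPow s ε (w ω) ^ (q / s) ∂μ) ^ (2 / q) := by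
  have hsup : ∀ ω, 0 ≤ ⨆ j, |w ω j| := fun ω => Real.iSup_nonneg fun j => abs_nonneg _
  rw [← rpow_mul_natCast (integral_nonneg fun ω => rpow_nonneg (hsup ω) q), Nat.cast_ofNat,
    one_div_mul_eq_div]
  refine rpow_le_rpow (integral_nonneg fun ω => rpow_nonneg (hsup ω) q)
    (integral_mono_of_nonneg (.of_forall fun ω => rpow_nonneg (hsup ω) q) hI
      (.of_forall fun ω => ?_)) (by positivity)
  have hG : 0 ≤ smoothLpPow s ε (w ω) := by unfold smoothLpPow; positivity
  beta_reduce
  rw [← one_div_mul_eq_div, rpow_mul hG]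
  exact rpow_le_rpow (hsup ω) (ciSup_le (abs_le_smoothLpPow_rpow hs hε (w ω))) hq.le

end Expectation

end SmoothLpNorm

theorem stmt8 {Ω : Type*} [MeasurableSpace Ω] (μ : Measure Ω) [IsProbabilityMeasure μ]
    (d n : ℕ) (hd : 0 < d) (q : ℝ) (hq : 2 ≤ q)
    (x : Fin n → Ω → Fin d → ℝ) (hmeas : ∀ i, Measurable (x i))
    (hindep : iIndepFun x μ)
    (hint : ∀ i j, Integrable (fun ω => x i ω j) μ)
    (hmean : ∀ i j, ∫ ω, x i ω j ∂μ = 0)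
    (hmom : ∀ i, Integrable (fun ω => (⨆ j, |x i ω j|) ^ q) μ) :
    ((∫ ω, (⨆ j, |∑ i, x i ω j|) ^ q ∂μ) ^ (1 / q)) ^ 2
      ≤ Real.exp 1 ^ 2 * (max q (Real.log d) - 1) *
          ∑ i, ((∫ ω, (⨆ j, |x i ω j|) ^ q ∂μ) ^ (1 / q)) ^ 2 := by
  have : Nonempty (Fin d) := ⟨⟨0, hd⟩⟩
  set s := max q (Real.log d)
  have hqs : q ≤ s := le_max_left _ _
  have hs : 2 ≤ s := hq.trans hqs
  have hlog : log (Fintype.card (Fin d)) ≤ s := by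
    rw [Fintype.card_fin]
    exact le_max_right q (log d)
  have hIx := fun i => integrable_vecLpNorm_rpow (by linarith) hlog (by linarith) (hmeas i) (hmom i)
  refine le_of_forall_pos_le_add fun δ hδ => ?_
  have hI := integrable_smoothLpPow_sum_rpow (ε := √δ) (by linarith) (sqrt_nonneg δ) (by linarith)
    hmeas hIx univ
  have hrio := rpow_integral_smoothLpPow_sum_le (ε := √δ) hs hq hqs (sqrt_pos.2 hδ) hmeas hindep
    hint hmean hIx univ
  rw [sq_sqrt hδ.le] at hrio
  calc ((∫ ω, (⨆ j, |∑ i, x i ω j|) ^ q ∂μ) ^ (1 / q)) ^ 2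
      ≤ (∫ ω, smoothLpPow s √δ (∑ i, x i ω) ^ (q / s) ∂μ) ^ (2 / q) := by
        simpa only [Finset.sum_apply] using
          integral_iSup_abs_rpow_le (by linarith) (sqrt_nonneg δ) (by linarith) hI
    _ ≤ δ + (s - 1) * ∑ i, (∫ ω, vecLpNorm s (x i ω) ^ q ∂μ) ^ (2 / q) := hrio
    _ ≤ δ + (s - 1) * ∑ i, exp 1 ^ 2 * ((∫ ω, (⨆ j, |x i ω j|) ^ q ∂μ) ^ (1 / q)) ^ 2 := by
        gcongr with i
        · linarith
        · exact integral_vecLpNorm_rpow_le (by linarith) hlog (by linarith) (hmom i)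
    _ = _ := by rw [← mul_sum]; ring
end
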